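/- arXiv:math/0703816 — 4 statements merged into one kernel-verified Lean document; each statement's English description precedes it below -/
import Mathlib

section
/- Let T > 0 and let q : ℝ → ℝ be continuous with q(t) ≤ (2π)²/T² for all t ∈ [0,T], with strict inequality on a set of positive measure. Then the only solution x of x'' + q(t)x = 0 on [0,T] satisfying x(0) = x(T) = 0 and sgn x'(0) = sgn x'(T) is the trivial solution x ≡ 0. -/
/-!
Compare `x` with `v(t) = sin (ω (t - a))`, `ω = 2π/T`, which solves `v'' + ω² v = 0`. The Wronskian
`W = x v' - x' v` satisfies `W' = (q - ω²) x v ≤ 0` on any positive arc `(a, b)` of `x` with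
`ω (b - a) ≤ π`, so `W(b) = -x'(b) sin (ω (b - a)) ≤ W(a) = 0`. Since `x'(b) < 0` at the end of a
positive arc (by uniqueness for the initial value problem), every arc of `x` has length at least
`T/2`. If `x'(0) > 0` and `x'(T) > 0`, then `x` has a positive arc followed by a negative arc
inside `[0, T]`, so both have length exactly `T/2`; on the arc where `q < ω²` on a set of positive
measure, `W` is strictly decreasing, contradicting `W(a) = W(b) = 0`.
-/

open Real MeasureTheory Set Filter Topology

theorem eqOn_zero_of_norm_deriv_le_mul_norm {E : Type*} [NormedAddCommGroup E]
    [NormedSpace ℝ E] {f f' : ℝ → E} {K a b t₀ : ℝ}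
    (hf : ∀ t ∈ Icc a b, HasDerivAt f (f' t) t) (bound : ∀ t ∈ Icc a b, ‖f' t‖ ≤ K * ‖f t‖)
    (ht₀ : t₀ ∈ Icc a b) (h0 : f t₀ = 0) : EqOn f 0 (Icc a b) := by
  intro t ht
  rcases le_total t₀ t with h | h
  · have hsub : Icc t₀ b ⊆ Icc a b := Icc_subset_Icc_left ht₀.1
    exact eq_zero_of_abs_deriv_le_mul_abs_self_of_eq_zero_right
      (fun s hs => (hf s (hsub hs)).continuousAt.continuousWithinAt)
      (fun s hs => (hf s (hsub (Ico_subset_Icc_self hs))).hasDerivWithinAt) h0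
      (fun s hs => bound s (hsub (Ico_subset_Icc_self hs))) t ⟨h, ht.2⟩
  · -- Run Grönwall forward for the reflection `s ↦ f (-s)` on `[-t₀, -a]`.
    have hsub : ∀ s ∈ Icc (-t₀) (-a), -s ∈ Icc a b :=
      fun s hs => ⟨by linarith [hs.2], by linarith [hs.1, ht₀.2]⟩
    have hg : ∀ s ∈ Icc (-t₀) (-a), HasDerivAt (fun s => f (-s)) (-f' (-s)) s := fun s hs => by
      simpa [Function.comp_def] using (hf (-s) (hsub s hs)).scomp s (hasDerivAt_neg s)
    simpa using eq_zero_of_abs_deriv_le_mul_abs_self_of_eq_zero_right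
      (fun s hs => (hg s hs).continuousAt.continuousWithinAt)
      (fun s hs => (hg s (Ico_subset_Icc_self hs)).hasDerivWithinAt) (by simpa using h0)
      (fun s hs => by simpa using bound (-s) (hsub s (Ico_subset_Icc_self hs)))
      (-t) ⟨by linarith, by linarith [ht.1]⟩

def IsSolutionOn (q x : ℝ → ℝ) (s : Set ℝ) : Prop :=
  ∀ t ∈ s, deriv (deriv x) t + q t * x t = 0

theorem IsSolutionOn.mono {q x : ℝ → ℝ} {s s' : Set ℝ} (h : IsSolutionOn q x s) (hs : s' ⊆ s) :
    IsSolutionOn q x s' :=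
  fun t ht => h t (hs ht)

theorem IsSolutionOn.neg {q x : ℝ → ℝ} {s : Set ℝ} (h : IsSolutionOn q x s) :
    IsSolutionOn q (-x) s := by
  intro t ht
  simp only [deriv.neg', deriv.fun_neg, Pi.neg_apply]
  linarith [h t ht]

theorem eqOn_zero_of_deriv_eq_zero {q x : ℝ → ℝ} {a b t₀ : ℝ} (hq : ContinuousOn q (Icc a b))
    (hx : ContDiff ℝ 2 x) (hode : IsSolutionOn q x (Icc a b))
    (ht₀ : t₀ ∈ Icc a b) (h0 : x t₀ = 0) (h1 : deriv x t₀ = 0) : EqOn x 0 (Icc a b) := by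
  obtain ⟨M, hM⟩ := isCompact_Icc.exists_bound_of_continuousOn hq
  have hphase : ∀ t, HasDerivAt (fun s => (x s, deriv x s)) (deriv x t, deriv (deriv x) t) t :=
    fun t => ((hx.differentiable two_ne_zero) t).hasDerivAt.prodMk
      (hx.differentiable_deriv_two t).hasDerivAt
  have hbound : ∀ t ∈ Icc a b, ‖(deriv x t, deriv (deriv x) t)‖ ≤
      max 1 M * ‖(x t, deriv x t)‖ := by
    intro t ht
    rw [show deriv (deriv x) t = -(q t * x t) by linarith [hode t ht]]
    simp only [Prod.norm_mk, norm_neg, norm_mul]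
    refine max_le ?_ ?_
    · exact (le_max_right _ _).trans (le_mul_of_one_le_left (by positivity) (le_max_left _ _))
    · exact mul_le_mul ((hM t ht).trans (le_max_right _ _)) (le_max_left _ _) (norm_nonneg _)
        (by positivity)
  intro t ht
  exact congrArg Prod.fst (eqOn_zero_of_norm_deriv_le_mul_norm (fun t _ => hphase t) hbound ht₀
    (by simp [h0, h1]) ht)

noncomputable def wronskian (u v : ℝ → ℝ) (t : ℝ) : ℝ := u t * deriv v t - deriv u t * v t

theorem hasDerivAt_wronskian {u v : ℝ → ℝ} (hu : ContDiff ℝ 2 u) (hv : ContDiff ℝ 2 v) (t : ℝ) :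
    HasDerivAt (wronskian u v) (u t * deriv (deriv v) t - deriv (deriv u) t * v t) t := by
  have hu1 := ((hu.differentiable two_ne_zero) t).hasDerivAt
  have hv1 := ((hv.differentiable two_ne_zero) t).hasDerivAt
  exact ((hu1.fun_mul (hv.differentiable_deriv_two t).hasDerivAt).fun_sub
    ((hu.differentiable_deriv_two t).hasDerivAt.fun_mul hv1)).congr_deriv (by ring)

section SineComparison

variable {ω a : ℝ}

theorem deriv_sin_mul_sub :
    deriv (fun s => sin (ω * (s - a))) = fun s => ω * cos (ω * (s - a)) := by
  funext s
  have h := (((hasDerivAt_id' s).sub_const a).const_mul ω).sin.deriv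
  rw [h]; ring

theorem deriv_deriv_sin_mul_sub :
    deriv (deriv fun s => sin (ω * (s - a))) = fun s => -ω ^ 2 * sin (ω * (s - a)) := by
  rw [deriv_sin_mul_sub]
  funext s
  have h := ((((hasDerivAt_id' s).sub_const a).const_mul ω).cos.const_mul ω).deriv
  rw [h]; ring

theorem wronskian_sin_mul_sub (x : ℝ → ℝ) (t : ℝ) :
    wronskian x (fun s => sin (ω * (s - a))) t =
      x t * (ω * cos (ω * (t - a))) - deriv x t * sin (ω * (t - a)) := by
  rw [wronskian, deriv_sin_mul_sub]

theorem hasDerivAt_wronskian_sin_mul_sub {q x : ℝ → ℝ} {t : ℝ} (hx : ContDiff ℝ 2 x)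
    (hode : deriv (deriv x) t + q t * x t = 0) :
    HasDerivAt (wronskian x (fun s => sin (ω * (s - a))))
      ((q t - ω ^ 2) * (x t * sin (ω * (t - a)))) t := by
  have hv : ContDiff ℝ 2 fun s => sin (ω * (s - a)) := by fun_prop
  convert hasDerivAt_wronskian hx hv t using 1
  rw [deriv_deriv_sin_mul_sub, show deriv (deriv x) t = -(q t * x t) by linarith]
  ring

variable {q x : ℝ → ℝ} {b : ℝ}

theorem antitoneOn_wronskian_sin_mul_sub (hx : ContDiff ℝ 2 x)
    (hode : IsSolutionOn q x (Icc a b))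
    (hq : ∀ t ∈ Icc a b, q t ≤ ω ^ 2) (hω : 0 < ω) (hπ : ω * (b - a) ≤ π)
    (hpos : ∀ t ∈ Ioo a b, 0 < x t) :
    AntitoneOn (wronskian x (fun s => sin (ω * (s - a)))) (Icc a b) := by
  have hW := fun t (ht : t ∈ Icc a b) =>
    hasDerivAt_wronskian_sin_mul_sub (ω := ω) (a := a) hx (hode t ht)
  refine antitoneOn_of_hasDerivWithinAt_nonpos (convex_Icc a b)
    (f' := fun t => (q t - ω ^ 2) * (x t * sin (ω * (t - a))))
    (fun t ht => (hW t ht).continuousAt.continuousWithinAt) ?_ ?_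
  · rw [interior_Icc]
    exact fun t ht => (hW t (Ioo_subset_Icc_self ht)).hasDerivWithinAt
  · rw [interior_Icc]
    intro t ht
    have hsin : 0 < sin (ω * (t - a)) := sin_pos_of_pos_of_lt_pi (mul_pos hω (by linarith [ht.1]))
      ((mul_lt_mul_of_pos_left (by linarith [ht.2]) hω).trans_le hπ)
    exact mul_nonpos_of_nonpos_of_nonneg (by linarith [hq t (Ioo_subset_Icc_self ht)])
      (mul_pos (hpos t ht) hsin).le

theorem pi_le_mul_sub_of_deriv_neg (hx : ContDiff ℝ 2 x)
    (hode : IsSolutionOn q x (Icc a b))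
    (hq : ∀ t ∈ Icc a b, q t ≤ ω ^ 2) (hω : 0 < ω) (hab : a < b)
    (hpos : ∀ t ∈ Ioo a b, 0 < x t) (hxa : x a = 0) (hxb : x b = 0) (hx'b : deriv x b < 0) :
    π ≤ ω * (b - a) := by
  by_contra! hlt
  have hW := antitoneOn_wronskian_sin_mul_sub hx hode hq hω hlt.le hpos
    (left_mem_Icc.2 hab.le) (right_mem_Icc.2 hab.le) hab.le
  have hsin : 0 < sin (ω * (b - a)) := sin_pos_of_pos_of_lt_pi (mul_pos hω (by linarith)) hlt
  simp only [wronskian_sin_mul_sub, hxa, hxb, zero_mul, zero_sub, sub_self, mul_zero, sin_zero]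
    at hW
  nlinarith

theorem mul_sub_lt_pi_of_volume_pos (hx : ContDiff ℝ 2 x)
    (hode : IsSolutionOn q x (Icc a b))
    (hq : ∀ t ∈ Icc a b, q t ≤ ω ^ 2) (hω : 0 < ω) (hab : a < b) (hπ : ω * (b - a) ≤ π)
    (hpos : ∀ t ∈ Ioo a b, 0 < x t) (hxa : x a = 0) (hxb : x b = 0)
    (hvol : 0 < volume {t ∈ Icc a b | q t < ω ^ 2}) :
    ω * (b - a) < π := by
  refine hπ.lt_of_ne fun heq => ?_
  obtain ⟨c, hc, hqc⟩ : ∃ c ∈ Ioo a b, q c < ω ^ 2 := by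
    by_contra! h
    refine hvol.ne' (measure_mono_null (fun t ht => ?_) ((toFinite {a, b}).measure_zero _))
    rw [← Icc_sdiff_Ioo_same hab.le]
    exact ⟨ht.1, fun htI => (h t htI).not_gt ht.2⟩
  set W := wronskian x (fun s => sin (ω * (s - a)))
  have hanti := antitoneOn_wronskian_sin_mul_sub hx hode hq hω hπ hpos
  have hWa : W a = 0 := by simp [W, wronskian_sin_mul_sub, hxa]
  have hWb : W b = 0 := by simp [W, wronskian_sin_mul_sub, hxb, heq]
  have hW0 : ∀ t ∈ Icc a b, W t = 0 := fun t ht => le_antisymm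
    (hWa ▸ hanti (left_mem_Icc.2 hab.le) ht ht.1)
    (hWb ▸ hanti ht (right_mem_Icc.2 hab.le) ht.2)
  have hderiv : HasDerivAt W 0 c := (hasDerivAt_const c (0 : ℝ)).congr_of_eventuallyEq
    (eventually_of_mem (Ioo_mem_nhds hc.1 hc.2) fun t ht => hW0 t (Ioo_subset_Icc_self ht))
  have hsin : 0 < sin (ω * (c - a)) := sin_pos_of_pos_of_lt_pi (mul_pos hω (by linarith [hc.1]))
    ((mul_lt_mul_of_pos_left (by linarith [hc.2]) hω).trans_le hπ)
  have := (hasDerivAt_wronskian_sin_mul_sub (ω := ω) (a := a) hx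
    (hode c (Ioo_subset_Icc_self hc))).unique hderiv
  nlinarith [mul_pos (hpos c hc) hsin]

end SineComparison

theorem exists_first_zero {x : ℝ → ℝ} {a d : ℝ} (hx : Continuous x)
    (hpos : ∀ᶠ t in 𝓝[>] a, 0 < x t) (hxd : x d = 0) (had : a < d) :
    ∃ b ∈ Ioc a d, x b = 0 ∧ ∀ t ∈ Ioo a b, 0 < x t := by
  obtain ⟨u, hau, hu⟩ := mem_nhdsGT_iff_exists_Ioc_subset.mp hpos
  have hud : u < d := by
    by_contra! hdu
    exact (hu ⟨had, hdu⟩ : 0 < x d).ne' hxd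
  set Z := Icc u d ∩ x ⁻¹' {0}
  have hZ : IsClosed Z := isClosed_Icc.inter (isClosed_singleton.preimage hx)
  have hdZ : d ∈ Z := ⟨right_mem_Icc.2 hud.le, hxd⟩
  have hbdd : BddBelow Z := bddBelow_Icc.mono inter_subset_left
  have hbZ : sInf Z ∈ Z := hZ.csInf_mem ⟨d, hdZ⟩ hbdd
  refine ⟨sInf Z, ⟨hau.trans_le hbZ.1.1, hbZ.1.2⟩, hbZ.2, fun t ht => ?_⟩
  rcases le_or_gt t u with htu | htu
  · exact hu ⟨ht.1, htu⟩
  · by_contra! hxt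
    obtain ⟨s, hs, hxs⟩ := intermediate_value_Icc' htu.le hx.continuousOn
      ⟨hxt, (hu ⟨hau, le_rfl⟩ : 0 < x u).le⟩
    have : sInf Z ≤ s := csInf_le hbdd ⟨⟨hs.1, hs.2.trans (ht.2.le.trans hbZ.1.2)⟩, hxs⟩
    linarith [hs.2, ht.2]

theorem eventually_pos_of_deriv_pos {x : ℝ → ℝ} {a : ℝ} (hxa : x a = 0) (hx'a : 0 < deriv x a) :
    ∀ᶠ t in 𝓝[>] a, 0 < x t := by
  filter_upwards [nhdsWithin_le_nhds (eventually_nhdsWithin_sign_eq_of_deriv_pos hx'a hxa),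
    self_mem_nhdsWithin] with t hsign (hat : a < t)
  rwa [sign_pos (sub_pos.2 hat), sign_eq_one_iff] at hsign

theorem exists_first_zero_deriv_neg {q x : ℝ → ℝ} {a d : ℝ} (hq : ContinuousOn q (Icc a d))
    (hx : ContDiff ℝ 2 x) (hode : IsSolutionOn q x (Icc a d)) (hxa : x a = 0)
    (hx'a : 0 < deriv x a) (hxd : x d = 0) (had : a < d) :
    ∃ b ∈ Ioc a d, x b = 0 ∧ (∀ t ∈ Ioo a b, 0 < x t) ∧ deriv x b < 0 := by
  obtain ⟨b, hb, hxb, hpos⟩ :=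
    exists_first_zero hx.continuous (eventually_pos_of_deriv_pos hxa hx'a) hxd had
  refine ⟨b, hb, hxb, hpos, lt_of_not_ge fun hx'b => ?_⟩
  rcases hx'b.lt_or_eq with hx'b | hx'b
  · obtain ⟨t, hsign, ht⟩ := (((eventually_nhdsWithin_sign_eq_of_deriv_pos hx'b hxb).filter_mono
      nhdsWithin_le_nhds).and (Ioo_mem_nhdsLT hb.1)).exists
    rw [sign_neg (sub_neg.2 ht.2), sign_eq_neg_one_iff] at hsign
    exact (hpos t ht).not_gt hsign
  · have hmid : (a + b) / 2 ∈ Ioo a b := ⟨by linarith [hb.1], by linarith [hb.1]⟩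
    have := eqOn_zero_of_deriv_eq_zero hq hx hode ⟨hb.1.le, hb.2⟩ hxb hx'b.symm
      ⟨hmid.1.le, hmid.2.le.trans hb.2⟩
    exact (hpos _ hmid).ne' this

theorem deriv_nonpos_of_deriv_pos {T : ℝ} {q x : ℝ → ℝ} (hT : 0 < T) (hq : Continuous q)
    (hub : ∀ t ∈ Icc 0 T, q t ≤ (2 * π / T) ^ 2)
    (hstrict : 0 < volume {t ∈ Icc 0 T | q t < (2 * π / T) ^ 2})
    (hx : ContDiff ℝ 2 x) (hode : IsSolutionOn q x (Icc 0 T))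
    (hx0 : x 0 = 0) (hxT : x T = 0) (hx'0 : 0 < deriv x 0) : deriv x T ≤ 0 := by
  by_contra! hx'T
  set ω := 2 * π / T
  have hω : 0 < ω := by positivity
  have hωT : ω * T = 2 * π := by simp only [ω]; field_simp
  obtain ⟨t₁, ht₁, hxt₁, hpos₁, hx't₁⟩ :=
    exists_first_zero_deriv_neg hq.continuousOn hx hode hx0 hx'0 hxT hT
  have ht₁T : t₁ < T := ht₁.2.lt_of_ne (by rintro rfl; linarith)
  have hsub₁ : Icc 0 t₁ ⊆ Icc 0 T := Icc_subset_Icc_right ht₁.2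
  have hsub₂ : Icc t₁ T ⊆ Icc 0 T := Icc_subset_Icc_left ht₁.1.le
  have hode₂ : IsSolutionOn q (-x) (Icc t₁ T) := hode.neg.mono hsub₂
  obtain ⟨t₂, ht₂, hxt₂, hpos₂, hx't₂⟩ := exists_first_zero_deriv_neg hq.continuousOn hx.neg
    hode₂ (by simp [hxt₁]) (by simpa [deriv.neg'] using hx't₁) (by simp [hxT]) ht₁T
  have harc₁ := pi_le_mul_sub_of_deriv_neg hx (hode.mono hsub₁) (fun t ht => hub t (hsub₁ ht)) hω
    ht₁.1 hpos₁ hx0 hxt₁ hx't₁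
  have harc₂ := pi_le_mul_sub_of_deriv_neg hx.neg (hode₂.mono (Icc_subset_Icc_right ht₂.2))
    (fun t ht => hub t (hsub₂ (Icc_subset_Icc_right ht₂.2 ht))) hω ht₂.1 hpos₂ (by simp [hxt₁])
    hxt₂ hx't₂
  have hωt₂ : ω * t₂ ≤ ω * T := mul_le_mul_of_nonneg_left ht₂.2 hω.le
  -- Both arcs have length at least `T/2`, so `t₁ = T/2` and `t₂ = T`.
  have ht₂T : t₂ = T := le_antisymm ht₂.2 (le_of_mul_le_mul_left (by linarith) hω)
  subst ht₂T
  have hsplit : {t ∈ Icc 0 t₂ | q t < ω ^ 2} =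
      {t ∈ Icc 0 t₁ | q t < ω ^ 2} ∪ {t ∈ Icc t₁ t₂ | q t < ω ^ 2} := by
    rw [← Icc_union_Icc_eq_Icc ht₁.1.le ht₁.2]
    exact sep_union
  simp only [pos_iff_ne_zero, hsplit, Ne, measure_union_null_iff, not_and_or] at hstrict
  rcases hstrict with hvol | hvol
  · have := mul_sub_lt_pi_of_volume_pos hx (hode.mono hsub₁) (fun t ht => hub t (hsub₁ ht)) hω
      ht₁.1 (by linarith) hpos₁ hx0 hxt₁ (pos_iff_ne_zero.2 hvol)
    linarith
  · have := mul_sub_lt_pi_of_volume_pos hx.neg hode₂ (fun t ht => hub t (hsub₂ ht)) hω ht₁T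
      (by linarith) hpos₂ (by simp [hxt₁]) hxt₂ (pos_iff_ne_zero.2 hvol)
    linarith

theorem Real.pos_of_sign_eq_sign {a b : ℝ} (h : Real.sign a = Real.sign b) (ha : 0 < a) :
    0 < b := by
  by_contra! hb
  rcases hb.lt_or_eq with hb | rfl
  · norm_num [Real.sign_of_pos ha, Real.sign_of_neg hb] at h
  · norm_num [Real.sign_of_pos ha, Real.sign_zero] at h

/-- If `q ≤ (2π)²/T²` on `[0,T]` with strict inequality on a set of positive measure, then the
only solution of `x'' + q x = 0`, `x(0) = x(T) = 0`, `sgn x'(0) = sgn x'(T)` is trivial. -/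
theorem stmt1 (T : ℝ) (hT : 0 < T) (q : ℝ → ℝ) (hq : Continuous q)
    (hub : ∀ t ∈ Icc (0 : ℝ) T, q t ≤ (2 * π) ^ 2 / T ^ 2)
    (hstrict : 0 < volume {t ∈ Icc (0 : ℝ) T | q t < (2 * π) ^ 2 / T ^ 2})
    (x : ℝ → ℝ) (hx : ContDiff ℝ 2 x)
    (hode : ∀ t ∈ Icc (0 : ℝ) T, deriv (deriv x) t + q t * x t = 0)
    (hx0 : x 0 = 0) (hxT : x T = 0)
    (hsgn : Real.sign (deriv x 0) = Real.sign (deriv x T)) :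
    ∀ t ∈ Icc (0 : ℝ) T, x t = 0 := by
  rw [← div_pow] at hub hstrict
  rcases lt_trichotomy (deriv x 0) 0 with hx'0 | hx'0 | hx'0
  · have hx'T : deriv x T < 0 := by
      simpa using Real.pos_of_sign_eq_sign (a := -deriv x 0) (b := -deriv x T)
        (by simp [Real.sign_neg, hsgn]) (by linarith)
    have := deriv_nonpos_of_deriv_pos (x := -x) hT hq hub hstrict hx.neg (IsSolutionOn.neg hode)
      (by simp [hx0]) (by simp [hxT]) (by simpa using hx'0)
    simp only [deriv.neg', neg_nonpos] at this
    linarith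
  · exact eqOn_zero_of_deriv_eq_zero hq.continuousOn hx hode (left_mem_Icc.2 hT.le) hx0 hx'0
  · exact absurd (deriv_nonpos_of_deriv_pos hT hq hub hstrict hx hode hx0 hxT hx'0)
      (Real.pos_of_sign_eq_sign hsgn hx'0).not_ge
end

section
/- Let c ∈ ℝ, T > 0, and let α : ℝ → ℝ be a T-periodic essentially bounded function such that α(t) ≤ (2π)²/T² + c²/4 for a.e. t with strict inequality on a set of positive measure, and such that the average (1/T)∫₀^T α(t) dt > 0. Then the equation x'' + c x' + α(t) x = 0 admits no nontrivial T-periodic solution. -/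
/-!
Under `y = e^{ct/2} x` the equation becomes `y'' + (α - c²/4) y = 0` with
`α - c²/4 ≤ (2π/T)²`, and `x`, `y` have the same zeros. Because `α` is essentially bounded, the
energy `x² + x'²` satisfies `|E'| ≤ L E`, so a solution vanishing together with its derivative is
identically zero: all zeros of a nontrivial solution are simple.

If `x` has no zero, then with `g = x'/x` one has `α = -(g' + g² + c g)` a.e., and `g'`, `g` both
integrate to zero over a period, so `∫ α = -∫ g² ≤ 0`. If `x` has a zero `t₀`, a simple zero
cannot be the only one in a period (`x'(t₀) = x'(t₀ + T)` while `x` keeps its sign in between),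
and the Wronskian of `y` with `sin (2π (t - s) / T)` shows that consecutive zeros are at least
`T/2` apart. Hence the zeros in `[t₀, t₀ + T]` are exactly `t₀, t₀ + T/2, t₀ + T`, and the
equality case of the same comparison forces `α = (2π/T)² + c²/4` a.e., contradicting the strict
inequality on a set of positive measure.
-/

open Real MeasureTheory Set Filter Topology

theorem le_of_ae_le_of_isOpen {X Y : Type*} [TopologicalSpace X] [MeasurableSpace X]
    {μ : Measure X} [μ.IsOpenPosMeasure] [LinearOrder Y] [TopologicalSpace Y]
    [OrderClosedTopology Y] {f g : X → Y} (hf : Continuous f) (hg : Continuous g) {U : Set X}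
    (hU : IsOpen U) (h : ∀ᵐ x ∂μ, x ∈ U → f x ≤ g x) {x : X} (hx : x ∈ U) : f x ≤ g x := by
  by_contra hlt
  obtain ⟨u, ⟨huU, hgf⟩, hu⟩ := (Measure.dense_of_ae h).inter_open_nonempty _
    (hU.inter (isOpen_lt hg hf)) ⟨x, hx, not_le.mp hlt⟩
  exact (hu huU).not_gt hgf

theorem IsPreconnected.forall_pos_or_forall_neg {X : Type*} [TopologicalSpace X] {S : Set X}
    {f : X → ℝ} (hS : IsPreconnected S) (hf : ContinuousOn f S) (hne : ∀ x ∈ S, f x ≠ 0) :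
    (∀ x ∈ S, 0 < f x) ∨ (∀ x ∈ S, f x < 0) := by
  by_contra h
  push Not at h
  obtain ⟨⟨a, ha, hfa⟩, ⟨b, hb, hfb⟩⟩ := h
  obtain ⟨c, hc, hfc⟩ := hS.intermediate_value ha hb hf ⟨hfa, hfb⟩
  exact hne c hc hfc

theorem Function.Periodic.deriv {f : ℝ → ℝ} {T : ℝ} (hf : Function.Periodic f T) :
    Function.Periodic (deriv f) T := fun t => by
  rw [← deriv_comp_add_const, funext hf]

theorem Function.Periodic.integral_deriv_eq_zero {f f' : ℝ → ℝ} {T : ℝ}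
    (hf : Function.Periodic f T) (hderiv : ∀ t, HasDerivAt f (f' t) t)
    (hint : IntervalIntegrable f' volume 0 T) : ∫ t in (0 : ℝ)..T, f' t = 0 := by
  rw [intervalIntegral.integral_eq_sub_of_hasDerivAt (fun t _ => hderiv t) hint, ← zero_add T,
    hf 0, sub_self]

theorem Function.Periodic.ae_of_ae_restrict_Ioc {β : Type*} {f : ℝ → β} {T : ℝ}
    (hf : Function.Periodic f T) (hT : 0 < T) {p : β → Prop} {a : ℝ}
    (h : ∀ᵐ t ∂volume.restrict (Ioc a (a + T)), p (f t)) : ∀ᵐ t, p (f t) := by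
  rw [ae_restrict_iff' measurableSet_Ioc] at h
  have hshift (n : ℤ) : ∀ᵐ t, t ∈ Ioc (a + n • T) (a + (n + 1) • T) → p (f t) := by
    refine ae_iff.mpr (measure_mono_null (fun t ht => ?_)
      ((measure_preimage_add_right volume (-(n • T)) _).trans (ae_iff.mp h)))
    simp only [mem_ofPred_eq, Classical.not_imp, mem_Ioc, add_smul, one_smul] at ht
    intro hshifted
    apply ht.2
    rw [← hf.sub_zsmul_eq n, sub_eq_add_neg]
    exact hshifted ⟨by linarith [ht.1.1], by linarith [ht.1.2]⟩
  filter_upwards [ae_all_iff.mpr hshift] with t ht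
  obtain ⟨n, hn⟩ := mem_iUnion.mp ((iUnion_Ioc_add_zsmul hT a).symm ▸ mem_univ t)
  exact ht n hn

theorem exists_first_zero_after {x : ℝ → ℝ} (hx : Continuous x) {t z : ℝ} (htz : t < z)
    (hz : x z = 0) (hiso : ∀ᶠ u in 𝓝[>] t, x u ≠ 0) :
    ∃ e ∈ Ioc t z, x e = 0 ∧ ∀ u ∈ Ioo t e, x u ≠ 0 := by
  obtain ⟨ε, hε, hne⟩ := mem_nhdsGT_iff_exists_Ioo_subset.mp hiso
  set S := {u | x u = 0} ∩ Ioc t z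
  have hzS : z ∈ S := ⟨hz, htz, le_rfl⟩
  have hbdd : BddBelow S := ⟨t, fun u hu => hu.2.1.le⟩
  have hε_le : ε ≤ sInf S := le_csInf ⟨z, hzS⟩ fun u hu => not_lt.mp fun h => hne ⟨hu.2.1, h⟩ hu.1
  have hzero : closure S ⊆ {u | x u = 0} :=
    closure_minimal inter_subset_left (isClosed_eq hx continuous_const)
  refine ⟨sInf S, ⟨lt_of_lt_of_le hε hε_le, csInf_le hbdd hzS⟩,
    hzero (csInf_mem_closure ⟨z, hzS⟩ hbdd), fun u hu hxu => ?_⟩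
  exact (csInf_le hbdd ⟨hxu, hu.1, hu.2.le.trans (csInf_le hbdd hzS)⟩).not_gt hu.2

section
variable {y : ℝ → ℝ} {s e : ℝ}

theorem deriv_nonneg_of_zero_of_pos_right (hy : DifferentiableAt ℝ y s) (hse : s < e)
    (hs : y s = 0) (hpos : ∀ t ∈ Ioo s e, 0 < y t) : 0 ≤ deriv y s := by
  refine ge_of_tendsto hy.hasDerivAt.tendsto_slope_zero_right ?_
  filter_upwards [Ioo_mem_nhdsGT (sub_pos.mpr hse)] with h hh
  rw [hs, sub_zero, smul_eq_mul]
  exact mul_nonneg (inv_nonneg.mpr hh.1.le) (hpos _ ⟨by linarith [hh.1], by linarith [hh.2]⟩).le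

theorem deriv_nonpos_of_zero_of_pos_left (hy : DifferentiableAt ℝ y e) (hse : s < e)
    (he : y e = 0) (hpos : ∀ t ∈ Ioo s e, 0 < y t) : deriv y e ≤ 0 := by
  refine le_of_tendsto hy.hasDerivAt.tendsto_slope_zero_left ?_
  filter_upwards [Ioo_mem_nhdsLT (sub_neg.mpr hse)] with h hh
  rw [he, sub_zero, smul_eq_mul]
  exact mul_nonpos_of_nonpos_of_nonneg (inv_nonpos.mpr hh.2.le)
    (hpos _ ⟨by linarith [hh.1], by linarith [hh.2]⟩).le

theorem deriv_mul_deriv_nonpos_of_ne_zero (hy : Differentiable ℝ y) (hse : s < e)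
    (hs : y s = 0) (he : y e = 0) (hne : ∀ t ∈ Ioo s e, y t ≠ 0) :
    deriv y s * deriv y e ≤ 0 := by
  rcases isPreconnected_Ioo.forall_pos_or_forall_neg hy.continuous.continuousOn hne
    with hpos | hneg
  · exact mul_nonpos_of_nonneg_of_nonpos (deriv_nonneg_of_zero_of_pos_right (hy s) hse hs hpos)
      (deriv_nonpos_of_zero_of_pos_left (hy e) hse he hpos)
  · have hneg' : ∀ t ∈ Ioo s e, 0 < (-y) t := fun t ht => neg_pos.mpr (hneg t ht)
    have h1 := deriv_nonneg_of_zero_of_pos_right (hy s).neg hse (by simp [hs]) hneg'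
    have h2 := deriv_nonpos_of_zero_of_pos_left (hy e).neg hse (by simp [he]) hneg'
    rw [deriv.neg] at h1 h2
    nlinarith

end

theorem eq_zero_of_abs_deriv_le_mul {f : ℝ → ℝ} {L : ℝ} (hf : Differentiable ℝ f)
    (hf0 : ∀ t, 0 ≤ f t) (hL : ∀ t, |deriv f t| ≤ L * f t) {τ : ℝ} (hτ : f τ = 0) (t : ℝ) :
    f t = 0 := by
  have hweighted (k u : ℝ) : HasDerivAt (fun u => exp (k * u) * f u)
      (exp (k * u) * (k * f u + deriv f u)) u :=
    (((hasDerivAt_id' u).const_mul k).exp.mul (hf u).hasDerivAt).congr_deriv (by ring)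
  have hdiff (k : ℝ) : Differentiable ℝ fun u => exp (k * u) * f u :=
    fun u => (hweighted k u).differentiableAt
  have hf' (u : ℝ) := abs_le.mp (hL u)
  rcases le_total τ t with h | h
  · have hanti : Antitone fun u => exp (-L * u) * f u :=
      antitone_of_deriv_nonpos (hdiff _) fun u => by
        rw [(hweighted _ u).deriv]
        exact mul_nonpos_of_nonneg_of_nonpos (exp_pos _).le (by linarith [(hf' u).2])
    have := hanti h
    dsimp only at this
    rw [hτ, mul_zero] at this
    exact le_antisymm (by nlinarith [exp_pos (-L * t), hf0 t]) (hf0 t)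
  · have hmono : Monotone fun u => exp (L * u) * f u :=
      monotone_of_deriv_nonneg (hdiff _) fun u => by
        rw [(hweighted _ u).deriv]
        exact mul_nonneg (exp_pos _).le (by linarith [(hf' u).1])
    have := hmono h
    dsimp only at this
    rw [hτ, mul_zero] at this
    exact le_antisymm (by nlinarith [exp_pos (L * t), hf0 t]) (hf0 t)

theorem eq_zero_of_abs_deriv_deriv_le {x : ℝ → ℝ} {K : ℝ} (hx : ContDiff ℝ 2 x) (hK : 0 ≤ K)
    (hbound : ∀ t, |deriv (deriv x) t| ≤ K * (|x t| + |deriv x t|)) {τ : ℝ} (h0 : x τ = 0)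
    (h1 : deriv x τ = 0) (t : ℝ) : x t = 0 := by
  have hx' : Differentiable ℝ x := hx.differentiable two_ne_zero
  have hx'' : Differentiable ℝ (deriv x) := hx.deriv'.differentiable one_ne_zero
  have henergy (u : ℝ) : HasDerivAt (fun u => x u ^ 2 + deriv x u ^ 2)
      (2 * x u * deriv x u + 2 * deriv x u * deriv (deriv x) u) u :=
    (((hx' u).hasDerivAt.pow 2).add ((hx'' u).hasDerivAt.pow 2)).congr_deriv (by norm_num)
  have henergy_le (u : ℝ) : |2 * x u * deriv x u + 2 * deriv x u * deriv (deriv x) u|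
      ≤ (1 + 3 * K) * (x u ^ 2 + deriv x u ^ 2) := by
    have hd := abs_nonneg (deriv x u)
    calc |2 * x u * deriv x u + 2 * deriv x u * deriv (deriv x) u|
        ≤ 2 * |x u| * |deriv x u| + 2 * |deriv x u| * |deriv (deriv x) u| := by
          refine (abs_add_le _ _).trans_eq ?_
          rw [abs_mul, abs_mul, abs_mul, abs_mul, abs_two]
      _ ≤ (1 + 3 * K) * (x u ^ 2 + deriv x u ^ 2) := by
          rw [← sq_abs (x u), ← sq_abs (deriv x u)]
          nlinarith [sq_nonneg (|x u| - |deriv x u|), mul_le_mul_of_nonneg_left (hbound u) hd,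
            mul_nonneg hK (sq_nonneg (|x u| - |deriv x u|))]
  have hE := eq_zero_of_abs_deriv_le_mul (f := fun u => x u ^ 2 + deriv x u ^ 2) (τ := τ)
    (fun u => (henergy u).differentiableAt) (fun u => by positivity)
    (fun u => (henergy u).deriv ▸ henergy_le u) (by simp [h0, h1]) t
  nlinarith [sq_nonneg (x t), sq_nonneg (deriv x t)]

/-- The Wronskian of `y` with `sin (b (t - s))`, a solution of `φ'' + b² φ = 0` vanishing at `s`. -/
noncomputable def sturmWronskian (y : ℝ → ℝ) (b s t : ℝ) : ℝ :=
  y t * (b * cos (b * (t - s))) - deriv y t * sin (b * (t - s))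

section Sturm
variable {y a : ℝ → ℝ} {b s e : ℝ}

theorem hasDerivAt_sturmWronskian (hy : ContDiff ℝ 2 y) (t : ℝ) :
    HasDerivAt (sturmWronskian y b s)
      ((-(b ^ 2 * y t) - deriv (deriv y) t) * sin (b * (t - s))) t := by
  have hθ : HasDerivAt (fun t => b * (t - s)) b t := by
    simpa using ((hasDerivAt_id t).sub_const s).const_mul b
  have hy' := ((hy.differentiable two_ne_zero) t).hasDerivAt
  have hy'' := ((hy.deriv'.differentiable one_ne_zero) t).hasDerivAt
  exact ((hy'.mul (hθ.cos.const_mul b)).sub (hy''.mul hθ.sin)).congr_deriv (by ring)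

theorem sturmWronskian_antitoneOn (hy : ContDiff ℝ 2 y)
    (hode : ∀ᵐ t, deriv (deriv y) t + a t * y t = 0) (hab : ∀ᵐ t, a t ≤ b ^ 2) (hb : 0 ≤ b)
    (hbse : b * (e - s) ≤ π) (hpos : ∀ t ∈ Ioo s e, 0 < y t) :
    AntitoneOn (sturmWronskian y b s) (Icc s e) := by
  have hW := hasDerivAt_sturmWronskian (b := b) (s := s) hy
  have hcont : Continuous fun t => (-(b ^ 2 * y t) - deriv (deriv y) t) * sin (b * (t - s)) :=
    have := hy.continuous_deriv one_le_two
    by fun_prop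
  refine antitoneOn_of_deriv_nonpos (convex_Icc s e)
    (fun t _ => (hW t).continuousAt.continuousWithinAt)
    (fun t _ => (hW t).differentiableAt.differentiableWithinAt) fun t ht => ?_
  rw [interior_Icc] at ht
  rw [(hW t).deriv]
  refine le_of_ae_le_of_isOpen (μ := volume) hcont continuous_const isOpen_Ioo ?_ ht
  filter_upwards [hode, hab] with t hode hab ht
  have hsin : 0 ≤ sin (b * (t - s)) := sin_nonneg_of_nonneg_of_le_pi
    (mul_nonneg hb (by linarith [ht.1]))
    (le_trans (mul_le_mul_of_nonneg_left (by linarith [ht.2]) hb) hbse)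
  have : -(b ^ 2 * y t) - deriv (deriv y) t = (a t - b ^ 2) * y t := by
    linear_combination -hode
  rw [this]
  exact mul_nonpos_of_nonpos_of_nonneg
    (mul_nonpos_of_nonpos_of_nonneg (by linarith) (hpos t ht).le) hsin

theorem sturm_gap_of_pos (hy : ContDiff ℝ 2 y)
    (hode : ∀ᵐ t, deriv (deriv y) t + a t * y t = 0) (hab : ∀ᵐ t, a t ≤ b ^ 2) (hb : 0 < b)
    (hse : s < e) (hpos : ∀ t ∈ Ioo s e, 0 < y t) (hs : y s = 0) (he : y e = 0)
    (he' : deriv y e ≠ 0) : π ≤ b * (e - s) := by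
  by_contra hlt
  push Not at hlt
  have hW := sturmWronskian_antitoneOn hy hode hab hb.le hlt.le hpos
    (left_mem_Icc.2 hse.le) (right_mem_Icc.2 hse.le) hse.le
  have hsin : 0 < sin (b * (e - s)) := sin_pos_of_pos_of_lt_pi (by nlinarith) hlt
  have hde : deriv y e < 0 :=
    lt_of_le_of_ne (deriv_nonpos_of_zero_of_pos_left
      ((hy.differentiable two_ne_zero) e) hse he hpos) he'
  simp only [sturmWronskian, hs, he, sub_self, mul_zero, sin_zero, zero_mul, zero_sub] at hW
  nlinarith

theorem sturm_ae_eq_of_pos (hy : ContDiff ℝ 2 y)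
    (hode : ∀ᵐ t, deriv (deriv y) t + a t * y t = 0) (hab : ∀ᵐ t, a t ≤ b ^ 2) (hb : 0 < b)
    (hpos : ∀ t ∈ Ioo s e, 0 < y t) (hs : y s = 0) (he : y e = 0)
    (hπ : b * (e - s) = π) : ∀ᵐ t ∂volume.restrict (Ioo s e), a t = b ^ 2 := by
  rw [ae_restrict_iff' measurableSet_Ioo]
  have hW := sturmWronskian_antitoneOn hy hode hab hb.le hπ.le hpos
  have hse : s ≤ e := by nlinarith [pi_pos]
  have hWs : sturmWronskian y b s s = 0 := by simp [sturmWronskian, hs]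
  have hWe : sturmWronskian y b s e = 0 := by simp [sturmWronskian, he, hπ]
  have hW0 : ∀ t ∈ Icc s e, sturmWronskian y b s t = 0 := fun t ht => le_antisymm
    (hWs ▸ hW (left_mem_Icc.2 hse) ht ht.1) (hWe ▸ hW ht (right_mem_Icc.2 hse) ht.2)
  filter_upwards [hode] with t hode ht
  have hderiv : (-(b ^ 2 * y t) - deriv (deriv y) t) * sin (b * (t - s)) = 0 := by
    refine (hasDerivAt_sturmWronskian hy t).unique
      ((hasDerivAt_const t (0 : ℝ)).congr_of_eventuallyEq ?_)
    filter_upwards [isOpen_Ioo.mem_nhds ht] with u hu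
    exact hW0 u (Ioo_subset_Icc_self hu)
  have hsin : 0 < sin (b * (t - s)) := sin_pos_of_pos_of_lt_pi
    (mul_pos hb (by linarith [ht.1])) (hπ ▸ mul_lt_mul_of_pos_left (by linarith [ht.2]) hb)
  have : (a t - b ^ 2) * (y t * sin (b * (t - s))) = 0 := by
    linear_combination hderiv + sin (b * (t - s)) * hode
  rcases mul_eq_zero.mp this with h | h
  · linarith
  · exact absurd h (mul_pos (hpos t ht) hsin).ne'

theorem ae_deriv_deriv_neg_add_mul (hode : ∀ᵐ t, deriv (deriv y) t + a t * y t = 0) :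
    ∀ᵐ t, deriv (deriv (-y)) t + a t * (-y) t = 0 := by
  filter_upwards [hode] with t ht
  simp only [deriv.neg', deriv.fun_neg', Pi.neg_apply]
  linear_combination -ht

theorem sturm_gap (hy : ContDiff ℝ 2 y)
    (hode : ∀ᵐ t, deriv (deriv y) t + a t * y t = 0) (hab : ∀ᵐ t, a t ≤ b ^ 2) (hb : 0 < b)
    (hse : s < e) (hne : ∀ t ∈ Ioo s e, y t ≠ 0) (hs : y s = 0) (he : y e = 0)
    (he' : deriv y e ≠ 0) : π ≤ b * (e - s) := by
  rcases isPreconnected_Ioo.forall_pos_or_forall_neg hy.continuous.continuousOn hne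
    with hpos | hneg
  · exact sturm_gap_of_pos hy hode hab hb hse hpos hs he he'
  · refine sturm_gap_of_pos hy.neg (ae_deriv_deriv_neg_add_mul hode) hab hb hse
      (fun t ht => neg_pos.mpr (hneg t ht)) (by simp [hs]) (by simp [he]) ?_
    simpa [deriv.neg'] using he'

theorem sturm_ae_eq (hy : ContDiff ℝ 2 y)
    (hode : ∀ᵐ t, deriv (deriv y) t + a t * y t = 0) (hab : ∀ᵐ t, a t ≤ b ^ 2) (hb : 0 < b)
    (hne : ∀ t ∈ Ioo s e, y t ≠ 0) (hs : y s = 0) (he : y e = 0)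
    (hπ : b * (e - s) = π) : ∀ᵐ t ∂volume.restrict (Ioo s e), a t = b ^ 2 := by
  rcases isPreconnected_Ioo.forall_pos_or_forall_neg hy.continuous.continuousOn hne
    with hpos | hneg
  · exact sturm_ae_eq_of_pos hy hode hab hb hpos hs he hπ
  · exact sturm_ae_eq_of_pos hy.neg (ae_deriv_deriv_neg_add_mul hode) hab hb
      (fun t ht => neg_pos.mpr (hneg t ht)) (by simp [hs]) (by simp [he]) hπ

end Sturm

section Damped
variable {c : ℝ} {x α : ℝ → ℝ}

theorem integral_nonpos_of_forall_ne_zero {T : ℝ} (hT : 0 ≤ T) (hx : ContDiff ℝ 2 x)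
    (hxper : Function.Periodic x T)
    (hode : ∀ᵐ t, deriv (deriv x) t + c * deriv x t + α t * x t = 0) (hne : ∀ t, x t ≠ 0) :
    ∫ t in (0 : ℝ)..T, α t ≤ 0 := by
  set g := fun t => deriv x t / x t
  have hx' (t : ℝ) := ((hx.differentiable two_ne_zero) t).hasDerivAt
  have hx'' (t : ℝ) := ((hx.deriv'.differentiable one_ne_zero) t).hasDerivAt
  have hcont := hx.continuous
  have hcont' := hx.continuous_deriv one_le_two
  have hcont'' := hx.deriv'.continuous_deriv le_rfl
  have hgcont : Continuous g := hcont'.div hcont hne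
  have hg'cont : Continuous fun t => deriv (deriv x) t / x t - g t ^ 2 :=
    (hcont''.div hcont hne).sub (hgcont.pow 2)
  have hg (t : ℝ) : HasDerivAt g (deriv (deriv x) t / x t - g t ^ 2) t :=
    ((hx'' t).div (hx' t) (hne t)).congr_deriv (by simp only [g]; field_simp)
  have hint_g' : ∫ t in (0 : ℝ)..T, (deriv (deriv x) t / x t - g t ^ 2) = 0 :=
    (hxper.deriv.div hxper).integral_deriv_eq_zero hg (hg'cont.intervalIntegrable 0 T)
  have hint_g : ∫ t in (0 : ℝ)..T, g t = 0 :=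
    (hxper.comp log).integral_deriv_eq_zero (fun t => (hx' t).log (hne t))
      (hgcont.intervalIntegrable 0 T)
  calc ∫ t in (0 : ℝ)..T, α t
      = ∫ t in (0 : ℝ)..T, (-(deriv (deriv x) t / x t - g t ^ 2) - c * g t) - g t ^ 2 := by
        refine intervalIntegral.integral_congr_ae ?_
        filter_upwards [hode] with t ht _
        simp only [g]
        field_simp [hne t]
        linear_combination x t * ht
    _ = -∫ t in (0 : ℝ)..T, g t ^ 2 := by
        rw [intervalIntegral.integral_sub, intervalIntegral.integral_sub,
          intervalIntegral.integral_neg, intervalIntegral.integral_const_mul, hint_g', hint_g]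
        · ring
        all_goals exact Continuous.intervalIntegrable (by fun_prop) 0 T
    _ ≤ 0 := neg_nonpos.mpr (intervalIntegral.integral_nonneg hT fun t _ => sq_nonneg _)

theorem hasDerivAt_exp_mul_mul (hx : Differentiable ℝ x) (t : ℝ) :
    HasDerivAt (fun t => exp (c / 2 * t) * x t)
      (exp (c / 2 * t) * (c / 2 * x t + deriv x t)) t :=
  (((hasDerivAt_id' t).const_mul (c / 2)).exp.mul (hx t).hasDerivAt).congr_deriv (by ring)

theorem contDiff_exp_mul_mul (hx : ContDiff ℝ 2 x) :
    ContDiff ℝ 2 fun t => exp (c / 2 * t) * x t := by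
  fun_prop

theorem ae_deriv_deriv_exp_mul_mul_add (hx : ContDiff ℝ 2 x)
    (hode : ∀ᵐ t, deriv (deriv x) t + c * deriv x t + α t * x t = 0) :
    ∀ᵐ t, deriv (deriv fun t => exp (c / 2 * t) * x t) t
      + (α t - c ^ 2 / 4) * (exp (c / 2 * t) * x t) = 0 := by
  have hx' := hx.differentiable two_ne_zero
  have hx'' := hx.deriv'.differentiable one_ne_zero
  have hy' : deriv (fun t => exp (c / 2 * t) * x t)
      = fun t => exp (c / 2 * t) * (c / 2 * x t + deriv x t) :=
    funext fun t => (hasDerivAt_exp_mul_mul hx' t).deriv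
  have hdiff : Differentiable ℝ fun t => c / 2 * x t + deriv x t :=
    (hx'.const_mul _).add hx''
  filter_upwards [hode] with t ht
  rw [hy', (hasDerivAt_exp_mul_mul hdiff t).deriv,
    (((hx' t).hasDerivAt.const_mul (c / 2)).fun_add (hx'' t).hasDerivAt).deriv]
  linear_combination exp (c / 2 * t) * ht

theorem damped_sturm_gap {b s e : ℝ} (hx : ContDiff ℝ 2 x)
    (hode : ∀ᵐ t, deriv (deriv x) t + c * deriv x t + α t * x t = 0)
    (hub : ∀ᵐ t, α t ≤ b ^ 2 + c ^ 2 / 4) (hb : 0 < b) (hse : s < e)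
    (hne : ∀ t ∈ Ioo s e, x t ≠ 0) (hs : x s = 0) (he : x e = 0) (he' : deriv x e ≠ 0) :
    π ≤ b * (e - s) := by
  refine sturm_gap (a := fun t => α t - c ^ 2 / 4) (contDiff_exp_mul_mul hx)
    (ae_deriv_deriv_exp_mul_mul_add hx hode) (hub.mono fun t h => by linarith) hb hse
    (fun t ht => mul_ne_zero (exp_pos _).ne' (hne t ht)) (by simp [hs]) (by simp [he]) ?_
  rw [(hasDerivAt_exp_mul_mul (hx.differentiable two_ne_zero) e).deriv, he, mul_zero, zero_add]
  exact mul_ne_zero (exp_pos _).ne' he'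

theorem damped_sturm_ae_eq {b s e : ℝ} (hx : ContDiff ℝ 2 x)
    (hode : ∀ᵐ t, deriv (deriv x) t + c * deriv x t + α t * x t = 0)
    (hub : ∀ᵐ t, α t ≤ b ^ 2 + c ^ 2 / 4) (hb : 0 < b)
    (hne : ∀ t ∈ Ioo s e, x t ≠ 0) (hs : x s = 0) (he : x e = 0) (hπ : b * (e - s) = π) :
    ∀ᵐ t ∂volume.restrict (Ioo s e), α t = b ^ 2 + c ^ 2 / 4 := by
  filter_upwards [sturm_ae_eq (a := fun t => α t - c ^ 2 / 4) (contDiff_exp_mul_mul hx)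
    (ae_deriv_deriv_exp_mul_mul_add hx hode) (hub.mono fun t h => by linarith) hb
    (fun t ht => mul_ne_zero (exp_pos _).ne' (hne t ht)) (by simp [hs]) (by simp [he]) hπ]
    with t ht
  linarith

theorem damped_eq_zero_of_eq_zero {C τ : ℝ} (hx : ContDiff ℝ 2 x)
    (hode : ∀ᵐ t, deriv (deriv x) t + c * deriv x t + α t * x t = 0)
    (hC : ∀ᵐ t, |α t| ≤ C) (h0 : x τ = 0) (h1 : deriv x τ = 0) (t : ℝ) : x t = 0 := by
  set K := |c| + |C|
  have hbound : ∀ᵐ t, |deriv (deriv x) t| ≤ K * (|x t| + |deriv x t|) := by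
    filter_upwards [hode, hC] with t ht hαt
    rw [show deriv (deriv x) t = -(c * deriv x t) - α t * x t by linear_combination ht]
    calc |-(c * deriv x t) - α t * x t| ≤ |c| * |deriv x t| + |C| * |x t| := by
          refine (abs_sub _ _).trans ?_
          rw [abs_neg, abs_mul, abs_mul]
          exact add_le_add le_rfl
            (mul_le_mul_of_nonneg_right (hαt.trans (le_abs_self C)) (abs_nonneg _))
      _ ≤ K * (|x t| + |deriv x t|) := by
          nlinarith [abs_nonneg c, abs_nonneg C, abs_nonneg (x t), abs_nonneg (deriv x t)]
  have hcont := hx.continuous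
  have hcont' := hx.continuous_deriv one_le_two
  have hcont'' := hx.deriv'.continuous_deriv le_rfl
  exact eq_zero_of_abs_deriv_deriv_le hx (by positivity)
    (fun t => le_of_ae_le_of_isOpen (μ := volume) (by fun_prop) (by fun_prop) isOpen_univ
      (hbound.mono fun t h _ => h) (mem_univ t)) h0 h1 t

theorem damped_ae_eq_of_zero {b T t₀ : ℝ} (hx : ContDiff ℝ 2 x)
    (hxper : Function.Periodic x T)
    (hode : ∀ᵐ t, deriv (deriv x) t + c * deriv x t + α t * x t = 0)
    (hub : ∀ᵐ t, α t ≤ b ^ 2 + c ^ 2 / 4) (hb : 0 < b) (hbT : b * T = 2 * π)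
    (hsimple : ∀ τ, x τ = 0 → deriv x τ ≠ 0) (ht₀ : x t₀ = 0) :
    ∀ᵐ t ∂volume.restrict (Ioc t₀ (t₀ + T)), α t = b ^ 2 + c ^ 2 / 4 := by
  have hT : 0 < T := pos_of_mul_pos_right (hbT ▸ by positivity) hb.le
  have hx' := hx.differentiable two_ne_zero
  have hiso (τ : ℝ) (hτ : x τ = 0) : ∀ᶠ u in 𝓝[>] τ, x u ≠ 0 :=
    nhdsGT_le_nhdsNE τ (hτ ▸ (hx' τ).hasDerivAt.eventually_ne (hsimple τ hτ))
  have hT₀ : x (t₀ + T) = 0 := (hxper t₀).trans ht₀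
  obtain ⟨s₁, hs₁, hxs₁, hne₁⟩ :=
    exists_first_zero_after hx.continuous (by linarith) hT₀ (hiso t₀ ht₀)
  have hgap₁ := damped_sturm_gap hx hode hub hb hs₁.1 hne₁ ht₀ hxs₁ (hsimple s₁ hxs₁)
  rcases hs₁.2.lt_or_eq with hlt | heq
  · obtain ⟨s₂, hs₂, hxs₂, hne₂⟩ :=
      exists_first_zero_after hx.continuous hlt hT₀ (hiso s₁ hxs₁)
    have hgap₂ := damped_sturm_gap hx hode hub hb hs₂.1 hne₂ hxs₁ hxs₂ (hsimple s₂ hxs₂)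
    have hs₂T : s₂ = t₀ + T := le_antisymm hs₂.2 (by nlinarith)
    subst hs₂T
    have hIoc {s e : ℝ} : volume.restrict (Ioo s e) = volume.restrict (Ioc s e) :=
      Measure.restrict_congr_set Ioo_ae_eq_Ioc
    rw [← Ioc_union_Ioc_eq_Ioc hs₁.1.le hs₁.2, ae_restrict_union_iff, ← hIoc, ← hIoc]
    exact ⟨damped_sturm_ae_eq hx hode hub hb hne₁ ht₀ hxs₁ (by nlinarith),
      damped_sturm_ae_eq hx hode hub hb hne₂ hxs₁ hT₀ (by nlinarith)⟩
  · subst heq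
    have hd := deriv_mul_deriv_nonpos_of_ne_zero hx' hs₁.1 ht₀ hT₀ hne₁
    rw [hxper.deriv t₀] at hd
    exact absurd (mul_self_eq_zero.mp (le_antisymm hd (mul_self_nonneg _))) (hsimple t₀ ht₀)

end Damped

theorem stmt2_general (c T : ℝ) (hT : 0 < T) (α : ℝ → ℝ)
    (hper : Function.Periodic α T)
    (hbdd : ∃ C : ℝ, ∀ᵐ t ∂(volume : Measure ℝ), |α t| ≤ C)
    (hub : ∀ᵐ t ∂(volume : Measure ℝ), α t ≤ (2 * π) ^ 2 / T ^ 2 + c ^ 2 / 4)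
    (hstrict : 0 < volume {t ∈ Icc (0 : ℝ) T | α t < (2 * π) ^ 2 / T ^ 2 + c ^ 2 / 4})
    (havg : 0 < (1 / T) * ∫ t in (0 : ℝ)..T, α t)
    (x : ℝ → ℝ) (hx : ContDiff ℝ 2 x) (hxper : Function.Periodic x T)
    (hode : ∀ᵐ t ∂(volume : Measure ℝ),
      deriv (deriv x) t + c * deriv x t + α t * x t = 0) :
    ∀ t, x t = 0 := by
  by_contra hne
  push Not at hne
  obtain ⟨t₁, ht₁⟩ := hne
  obtain ⟨C, hC⟩ := hbdd
  have hsimple (τ : ℝ) (h0 : x τ = 0) : deriv x τ ≠ 0 := fun h1 =>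
    ht₁ (damped_eq_zero_of_eq_zero hx hode hC h0 h1 t₁)
  by_cases hzero : ∃ t₀, x t₀ = 0
  · obtain ⟨t₀, ht₀⟩ := hzero
    rw [← div_pow] at hub hstrict
    have hα := hper.ae_of_ae_restrict_Ioc hT (p := (· = (2 * π / T) ^ 2 + c ^ 2 / 4))
      (damped_ae_eq_of_zero hx hxper hode hub (by positivity) (div_mul_cancel₀ _ hT.ne')
        hsimple ht₀)
    exact hstrict.ne' (measure_mono_null (fun t ht => ht.2.ne) (ae_iff.mp hα))
  · push Not at hzero
    have := integral_nonpos_of_forall_ne_zero hT.le hx hxper hode hzero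
    nlinarith [one_div_pos.mpr hT]

/-- If `α` is `T`-periodic, essentially bounded, `α ≪ (2π)²/T² + c²/4` and `α` has positive
average, then `x'' + c x' + α x = 0` has no nontrivial `T`-periodic solution. -/
theorem stmt2 (c T : ℝ) (hT : 0 < T) (α : ℝ → ℝ) (hmeas : Measurable α)
    (hper : Function.Periodic α T)
    (hbdd : ∃ C : ℝ, ∀ᵐ t ∂(volume : Measure ℝ), |α t| ≤ C)
    (hub : ∀ᵐ t ∂(volume : Measure ℝ), α t ≤ (2 * π) ^ 2 / T ^ 2 + c ^ 2 / 4)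
    (hstrict : 0 < volume {t ∈ Icc (0 : ℝ) T | α t < (2 * π) ^ 2 / T ^ 2 + c ^ 2 / 4})
    (havg : 0 < (1 / T) * ∫ t in (0 : ℝ)..T, α t)
    (x : ℝ → ℝ) (hx : ContDiff ℝ 2 x) (hxper : Function.Periodic x T)
    (hode : ∀ᵐ t ∂(volume : Measure ℝ),
      deriv (deriv x) t + c * deriv x t + α t * x t = 0) :
    ∀ t, x t = 0 :=
  stmt2_general c T hT α hper hbdd hub hstrict havg x hx hxper hode
end

section
/- Let c ∈ ℝ, T > 0, and let α ≪ (2π)²/T² + c²/4 be T-periodic and essentially bounded. If x is a T-periodic solution of x'' + c x' + α(t) x = 0, then either x ≡ 0 or x(t) ≠ 0 for every t ∈ ℝ. -/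
/-!
Zeros of a nontrivial solution are simple: with `α` bounded, `(x, x')` obeys a linear Grönwall
bound, so a double zero forces `x ≡ 0`. The substitution `y = e^{ct/2} x` removes the damping
and turns the hypothesis into `y'' + q y = 0` with `q = α - c²/4 ≤ ω²`, `ω = 2π/T`. Comparing
`y` with `sin (ω (t - a))` through their Wronskian shows that consecutive zeros of `y` are at
least `π/ω = T/2` apart, with equality only if `q = ω²` a.e. between them. A periodic solution
with a zero `t₀` has two consecutive gaps filling `(t₀, t₀ + T]`, so both equal `T/2` and
`α = (2π/T)² + c²/4` a.e. on a whole period, against the strict inequality on a set of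
positive measure.
-/

open Real MeasureTheory Set Filter Topology

theorem eq_zero_of_norm_deriv_le_mul_norm {E : Type*} [NormedAddCommGroup E] [NormedSpace ℝ E]
    {f f' : ℝ → E} {K s : ℝ} (hf : ∀ t, HasDerivAt f (f' t) t)
    (hbound : ∀ t, ‖f' t‖ ≤ K * ‖f t‖) (hs : f s = 0) (t : ℝ) : f t = 0 := by
  have hcont : Continuous f := continuous_iff_continuousAt.2 fun t => (hf t).continuousAt
  rcases le_total s t with hst | hts
  · exact eq_zero_of_abs_deriv_le_mul_abs_self_of_eq_zero_right hcont.continuousOn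
      (fun τ _ => (hf τ).hasDerivWithinAt) hs (fun τ _ => hbound τ) t ⟨hst, le_rfl⟩
  · have hrev : ∀ τ, HasDerivAt (fun τ => f (-τ)) (-f' (-τ)) τ := fun τ => by
      simpa using (hf (0 - τ)).comp_const_sub 0 τ
    simpa using eq_zero_of_abs_deriv_le_mul_abs_self_of_eq_zero_right
      (hcont.comp continuous_neg).continuousOn (fun τ _ => (hrev τ).hasDerivWithinAt)
      (by simpa using hs) (fun τ _ => by simpa using hbound (-τ)) (-t) ⟨neg_le_neg hts, le_rfl⟩

theorem IsOpen.subset_of_ae_imp {X : Type*} [TopologicalSpace X] [MeasurableSpace X]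
    {μ : Measure X} [μ.IsOpenPosMeasure] {U s : Set X} (hU : IsOpen U) (hs : IsClosed s)
    (h : ∀ᵐ t ∂μ, t ∈ U → t ∈ s) : U ⊆ s := by
  have hnull : μ (U ∩ sᶜ) = 0 :=
    measure_eq_zero_iff_ae_notMem.2 (h.mono fun t ht hts => hts.2 (ht hts.1))
  intro t ht
  by_contra hts
  exact ((hU.inter hs.isOpen_compl).eq_empty_of_measure_zero hnull).subset ⟨ht, hts⟩

theorem eq_and_deriv_eq_zero_of_deriv_nonpos_of_le {f f' : ℝ → ℝ} {a b : ℝ} (hab : a ≤ b)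
    (hf : ∀ t, HasDerivAt f (f' t) t) (hf' : ∀ t ∈ Ioo a b, f' t ≤ 0) (hle : f a ≤ f b) :
    f b = f a ∧ ∀ t ∈ Ioo a b, f' t = 0 := by
  have hanti : AntitoneOn f (Icc a b) := by
    refine antitoneOn_of_deriv_nonpos (convex_Icc a b)
      (continuous_iff_continuousAt.2 fun t => (hf t).continuousAt).continuousOn
      (fun t _ => (hf t).differentiableAt.differentiableWithinAt) fun t ht => ?_
    rw [interior_Icc] at ht
    exact (hf t).deriv ▸ hf' t ht
  have hconst : ∀ t ∈ Icc a b, f t = f a := fun t ht => le_antisymm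
    (hanti (left_mem_Icc.2 hab) ht ht.1)
    (hle.trans (hanti ht (right_mem_Icc.2 hab) ht.2))
  refine ⟨hconst b (right_mem_Icc.2 hab), fun t ht => ?_⟩
  have hev : f =ᶠ[𝓝 t] fun _ => f a := Filter.eventually_of_mem (isOpen_Ioo.mem_nhds ht)
    fun u hu => hconst u (Ioo_subset_Icc_self hu)
  exact (hf t).unique ((hasDerivAt_const t (f a)).congr_of_eventuallyEq hev)

theorem HasDerivAt.eventually_nhdsGT_lt {f : ℝ → ℝ} {f' a : ℝ} (hf : HasDerivAt f f' a)
    (h : 0 < f') : ∀ᶠ t in 𝓝[>] a, f a < f t :=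
  ((hasDerivAt_iff_tendsto_slope_left_right.1 hf).2.eventually (lt_mem_nhds h)).mp
    (eventually_mem_nhdsWithin.mono fun _ ht hs => (slope_pos_iff_of_le (le_of_lt ht)).1 hs)

theorem HasDerivAt.nonpos_of_eventually_nhdsLT_le {f : ℝ → ℝ} {f' a : ℝ} (hf : HasDerivAt f f' a)
    (h : ∀ᶠ t in 𝓝[<] a, f a ≤ f t) : f' ≤ 0 :=
  le_of_tendsto (hasDerivAt_iff_tendsto_slope_left_right.1 hf).1
    (h.mp (eventually_mem_nhdsWithin.mono fun _ ht hle =>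
      slope_comm f _ _ ▸ (slope_nonpos_iff_of_le (le_of_lt ht)).2 hle))

theorem exists_first_zero_s4 {x x' : ℝ → ℝ} (hx : ∀ t, HasDerivAt x (x' t) t)
    (hsimple : ∀ s, x s = 0 → x' s ≠ 0) {u v : ℝ} (huv : u < v) (hu : x u = 0)
    (hu' : 0 < x' u) (hv : x v = 0) :
    ∃ w ∈ Ioc u v, x w = 0 ∧ (∀ t ∈ Ioo u w, 0 < x t) ∧ x' w < 0 := by
  have hcont : Continuous x := continuous_iff_continuousAt.2 fun t => (hx t).continuousAt
  obtain ⟨d₀, hud₀, hd₀⟩ := mem_nhdsGT_iff_exists_Ioo_subset.1 ((hx u).eventually_nhdsGT_lt hu')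
  set d := min d₀ v
  have hud : u < d := lt_min hud₀ huv
  have hd : ∀ t ∈ Ioo u d, 0 < x t := fun t ht =>
    hu ▸ hd₀ ⟨ht.1, ht.2.trans_le (min_le_left _ _)⟩
  set Z := Icc d v ∩ x ⁻¹' {0}
  have hbdd : BddBelow Z := ⟨d, fun t ht => ht.1.1⟩
  have hwZ : sInf Z ∈ Z := (isClosed_Icc.inter (isClosed_singleton.preimage hcont)).csInf_mem
    ⟨v, ⟨min_le_right _ _, le_rfl⟩, hv⟩ hbdd
  set w := sInf Z
  have huw : u < w := hud.trans_le hwZ.1.1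
  have hno_zero : ∀ t ∈ Ioo u w, x t ≠ 0 := fun t ht h0 => by
    rcases lt_or_ge t d with htd | hdt
    · exact (hd t ⟨ht.1, htd⟩).ne' h0
    · exact (csInf_le hbdd ⟨⟨hdt, ht.2.le.trans hwZ.1.2⟩, h0⟩).not_gt ht.2
  have hpos : ∀ t ∈ Ioo u w, 0 < x t := by
    intro t ht
    by_contra! hneg
    have hq : (u + d) / 2 ∈ Ioo u d := ⟨by linarith, by linarith⟩
    obtain ⟨s, hs, hs0⟩ := isPreconnected_Ioo.intermediate_value ht
      ⟨hq.1, hq.2.trans_le hwZ.1.1⟩ hcont.continuousOn ⟨hneg, (hd _ hq).le⟩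
    exact hno_zero s hs hs0
  refine ⟨w, ⟨huw, hwZ.1.2⟩, hwZ.2, hpos, lt_of_le_of_ne ?_ (hsimple w hwZ.2)⟩
  refine (hx w).nonpos_of_eventually_nhdsLT_le ?_
  filter_upwards [Ioo_mem_nhdsLT huw] with t ht
  rw [hwZ.2]
  exact (hpos t ht).le

theorem Function.Periodic.volume_preimage_inter_Ioc {β : Type*} {f : ℝ → β} {T : ℝ}
    (hf : Function.Periodic f T) (hT : 0 < T) {s : Set β} (hs : MeasurableSet (f ⁻¹' s))
    (u v : ℝ) : volume (f ⁻¹' s ∩ Ioc u (u + T)) = volume (f ⁻¹' s ∩ Ioc v (v + T)) := by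
  refine (isAddFundamentalDomain_Ioc hT u).measure_set_eq (isAddFundamentalDomain_Ioc hT v) hs
    fun g => ?_
  obtain ⟨n, hn⟩ := AddSubgroup.mem_zmultiples_iff.1 g.2
  ext t
  simp only [mem_preimage, AddSubgroup.vadd_def, vadd_eq_add, ← hn, add_comm _ t, hf.zsmul n t]

structure IsDampedHillSolution (c : ℝ) (α x x' x'' : ℝ → ℝ) : Prop where
  hasDerivAt : ∀ t, HasDerivAt x (x' t) t
  hasDerivAt_deriv : ∀ t, HasDerivAt x' (x'' t) t
  continuous_deriv_deriv : Continuous x''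
  ae_eq_zero : ∀ᵐ t, x'' t + c * x' t + α t * x t = 0

namespace IsDampedHillSolution

variable {c : ℝ} {α x x' x'' : ℝ → ℝ}

theorem continuous (h : IsDampedHillSolution c α x x' x'') : Continuous x :=
  continuous_iff_continuousAt.2 fun t => (h.hasDerivAt t).continuousAt

theorem continuous_deriv (h : IsDampedHillSolution c α x x' x'') : Continuous x' :=
  continuous_iff_continuousAt.2 fun t => (h.hasDerivAt_deriv t).continuousAt

theorem neg (h : IsDampedHillSolution c α x x' x'') :
    IsDampedHillSolution c α (fun t => -x t) (fun t => -x' t) (fun t => -x'' t) where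
  hasDerivAt t := (h.hasDerivAt t).neg
  hasDerivAt_deriv t := (h.hasDerivAt_deriv t).neg
  continuous_deriv_deriv := h.continuous_deriv_deriv.neg
  ae_eq_zero := h.ae_eq_zero.mono fun t ht => by linear_combination -ht

theorem eq_zero_of_eq_zero_of_deriv_eq_zero (h : IsDampedHillSolution c α x x' x'') {C s : ℝ}
    (hα : ∀ᵐ t, |α t| ≤ C) (hs : x s = 0) (hs' : x' s = 0) (t : ℝ) : x t = 0 := by
  set K := 1 + |c| + |C|
  set S := {t | ‖(x' t, x'' t)‖ ≤ K * ‖(x t, x' t)‖}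
  have hS : IsClosed S := by
    have := h.continuous; have := h.continuous_deriv; have := h.continuous_deriv_deriv
    exact isClosed_le (by fun_prop) (by fun_prop)
  have hae : ∀ᵐ t, t ∈ univ → t ∈ S := by
    filter_upwards [h.ae_eq_zero, hα] with t hode hαt _
    have hx'' : x'' t = -(c * x' t) - α t * x t := by linarith
    simp only [S, mem_ofPred_eq, Prod.norm_def, Real.norm_eq_abs, hx'']
    set M := max |x t| |x' t|
    have h1 : |x t| ≤ M := le_max_left _ _
    have h2 : |x' t| ≤ M := le_max_right _ _
    have hM : 0 ≤ M := (abs_nonneg _).trans h1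
    have h3 : |α t| * |x t| ≤ |C| * M :=
      mul_le_mul (hαt.trans (le_abs_self C)) h1 (abs_nonneg _) (abs_nonneg _)
    refine max_le (by nlinarith [abs_nonneg c, abs_nonneg C]) ?_
    calc |-(c * x' t) - α t * x t| ≤ |c| * |x' t| + |α t| * |x t| := by
          simpa [abs_mul] using abs_sub (-(c * x' t)) (α t * x t)
      _ ≤ K * M := by nlinarith [abs_nonneg c, abs_nonneg C]
  have hbound (t : ℝ) : t ∈ S := isOpen_univ.subset_of_ae_imp hS hae (mem_univ t)
  have hu := eq_zero_of_norm_deriv_le_mul_norm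
    (fun t => (h.hasDerivAt t).prodMk (h.hasDerivAt_deriv t)) hbound (s := s)
    (by simp [hs, hs']) t
  exact congrArg Prod.fst hu

theorem exp_mul (h : IsDampedHillSolution c α x x' x'') :
    IsDampedHillSolution 0 (fun t => α t - c ^ 2 / 4) (fun t => exp (c / 2 * t) * x t)
      (fun t => exp (c / 2 * t) * (c / 2 * x t + x' t))
      (fun t => exp (c / 2 * t) * (c ^ 2 / 4 * x t + c * x' t + x'' t)) := by
  have hexp : ∀ t, HasDerivAt (fun t => exp (c / 2 * t)) (exp (c / 2 * t) * (c / 2)) t :=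
    fun t => by simpa using ((hasDerivAt_id t).const_mul (c / 2)).exp
  refine ⟨fun t => ?_, fun t => ?_, ?_, ?_⟩
  · exact ((hexp t).mul (h.hasDerivAt t)).congr_deriv (by ring)
  · exact ((hexp t).mul (((h.hasDerivAt t).const_mul (c / 2)).add
      (h.hasDerivAt_deriv t))).congr_deriv (by simp only [Pi.add_apply]; ring)
  · have := h.continuous; have := h.continuous_deriv; have := h.continuous_deriv_deriv
    fun_prop
  · filter_upwards [h.ae_eq_zero] with t ht
    linear_combination exp (c / 2 * t) * ht

theorem sturm_comparison_undamped {q y y' y'' : ℝ → ℝ} (h : IsDampedHillSolution 0 q y y' y'')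
    {ω a b : ℝ} (hω : 0 < ω) (hq : ∀ᵐ t, q t ≤ ω ^ 2) (hab : a < b) (ha : y a = 0)
    (hb : y b = 0) (hpos : ∀ t ∈ Ioo a b, 0 < y t) (hb' : y' b < 0) (hle : b - a ≤ π / ω) :
    b - a = π / ω ∧ ∀ᵐ t ∂volume.restrict (Ioc a b), q t = ω ^ 2 := by
  set z := fun t => sin (ω * (t - a))
  set W := fun t => y t * (ω * cos (ω * (t - a))) - y' t * z t
  set W' := fun t => -(ω ^ 2 * y t * z t) - y'' t * z t
  have hπ : ω * (π / ω) = π := mul_div_cancel₀ π hω.ne'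
  have hW : ∀ t, HasDerivAt W (W' t) t := fun t => by
    have hin : HasDerivAt (fun t => ω * (t - a)) ω t := by
      simpa using ((hasDerivAt_id t).sub_const a).const_mul ω
    exact (((h.hasDerivAt t).mul (hin.cos.const_mul ω)).sub
      ((h.hasDerivAt_deriv t).mul hin.sin)).congr_deriv (by ring)
  have hz_pos : ∀ t ∈ Ioo a b, 0 < z t := fun t ht => sin_pos_of_pos_of_lt_pi
    (mul_pos hω (sub_pos.2 ht.1)) (by nlinarith [ht.2])
  have hW'_eq : ∀ᵐ t, W' t = (q t - ω ^ 2) * (y t * z t) := by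
    filter_upwards [h.ae_eq_zero] with t ht
    linear_combination (-z t) * ht
  have hW'_nonpos : Ioo a b ⊆ {t | W' t ≤ 0} := by
    refine isOpen_Ioo.subset_of_ae_imp (μ := volume) (isClosed_le ?_ continuous_const) ?_
    · have := h.continuous; have := h.continuous_deriv_deriv
      fun_prop
    filter_upwards [hW'_eq, hq] with t hWt hqt ht
    rw [hWt]
    exact mul_nonpos_of_nonpos_of_nonneg (by linarith) (mul_pos (hpos t ht) (hz_pos t ht)).le
  have hWb : 0 ≤ W b := by
    have : 0 ≤ z b := sin_nonneg_of_nonneg_of_le_pi (by nlinarith) (by nlinarith)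
    simp only [W, hb]
    nlinarith
  obtain ⟨hWb0, hW'_zero⟩ := eq_and_deriv_eq_zero_of_deriv_nonpos_of_le hab.le hW hW'_nonpos
    (by simpa [W, z, ha] using hWb)
  have hgap : b - a = π / ω := by
    have hzb : z b = 0 := by
      simp only [W, hb, ha, z, sub_self, mul_zero, sin_zero] at hWb0
      exact (mul_eq_zero.1 (by linarith : y' b * z b = 0)).resolve_left hb'.ne
    by_contra hne
    have : 0 < z b := sin_pos_of_pos_of_lt_pi (mul_pos hω (sub_pos.2 hab))
      (by nlinarith [lt_of_le_of_ne hle hne])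
    linarith
  refine ⟨hgap, ?_⟩
  rw [Measure.restrict_congr_set Ioo_ae_eq_Ioc.symm, ae_restrict_iff' measurableSet_Ioo]
  filter_upwards [hW'_eq] with t hWt ht
  rw [hW'_zero t ht] at hWt
  have := (mul_eq_zero.1 hWt.symm).resolve_right (mul_pos (hpos t ht) (hz_pos t ht)).ne'
  linarith

theorem sturm_comparison (h : IsDampedHillSolution c α x x' x'') {ω a b : ℝ} (hω : 0 < ω)
    (hα : ∀ᵐ t, α t ≤ ω ^ 2 + c ^ 2 / 4) (hab : a < b) (ha : x a = 0) (hb : x b = 0)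
    (hpos : ∀ t ∈ Ioo a b, 0 < x t) (hb' : x' b < 0) (hle : b - a ≤ π / ω) :
    b - a = π / ω ∧ ∀ᵐ t ∂volume.restrict (Ioc a b), α t = ω ^ 2 + c ^ 2 / 4 := by
  obtain ⟨hgap, hq⟩ := h.exp_mul.sturm_comparison_undamped hω
    (hα.mono fun t ht => by linarith) hab (by simp [ha]) (by simp [hb])
    (fun t ht => mul_pos (exp_pos _) (hpos t ht))
    (by simpa [hb] using mul_neg_of_pos_of_neg (exp_pos (c / 2 * b)) hb') hle
  exact ⟨hgap, hq.mono fun t ht => by linarith⟩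

theorem pi_div_le_sub (h : IsDampedHillSolution c α x x' x'') {ω a b : ℝ} (hω : 0 < ω)
    (hα : ∀ᵐ t, α t ≤ ω ^ 2 + c ^ 2 / 4) (hab : a < b) (ha : x a = 0) (hb : x b = 0)
    (hpos : ∀ t ∈ Ioo a b, 0 < x t) (hb' : x' b < 0) : π / ω ≤ b - a := by
  by_contra! hlt
  exact hlt.ne (h.sturm_comparison hω hα hab ha hb hpos hb' hlt.le).1

theorem ae_restrict_eq_of_periodic (h : IsDampedHillSolution c α x x' x'') {T : ℝ} (hT : 0 < T)
    (hα : ∀ᵐ t, α t ≤ (2 * π / T) ^ 2 + c ^ 2 / 4) (hper : Function.Periodic x T)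
    (hsimple : ∀ s, x s = 0 → x' s ≠ 0) {t₀ : ℝ} (h₀ : x t₀ = 0) :
    ∀ᵐ t ∂volume.restrict (Ioc t₀ (t₀ + T)), α t = (2 * π / T) ^ 2 + c ^ 2 / 4 := by
  wlog h₀' : 0 < x' t₀ generalizing x x' x''
  · exact this h.neg (fun t => by simp [hper t])
      (fun s hs => neg_ne_zero.2 (hsimple s (neg_eq_zero.1 hs))) (by simp [h₀])
      (neg_pos.2 ((hsimple t₀ h₀).lt_of_le (not_lt.1 h₀')))
  have hω : 0 < 2 * π / T := by positivity
  have hπω : π / (2 * π / T) = T / 2 := by field_simp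
  have hxT : x (t₀ + T) = 0 := (hper t₀).trans h₀
  have hx'T : x' (t₀ + T) = x' t₀ := by
    have := (h.hasDerivAt (t₀ + T)).comp_add_const t₀ T
    rw [funext hper] at this
    exact this.unique (h.hasDerivAt t₀)
  obtain ⟨t₁, ⟨h01, h1T⟩, hx₁, hpos₁, hx₁'⟩ :=
    exists_first_zero_s4 h.hasDerivAt hsimple (by linarith) h₀ h₀' hxT
  have h1T' : t₁ < t₀ + T := h1T.lt_of_ne (by rintro rfl; linarith)
  obtain ⟨t₂, ⟨h12, h2T⟩, hx₂, hpos₂, hx₂'⟩ := exists_first_zero_s4 h.neg.hasDerivAt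
    (fun s hs => neg_ne_zero.2 (hsimple s (neg_eq_zero.1 hs))) h1T' (by simp [hx₁])
    (by simpa using hx₁') (by simp [hxT])
  have hgap₁ := h.pi_div_le_sub hω hα h01 h₀ hx₁ hpos₁ hx₁'
  have hgap₂ := h.neg.pi_div_le_sub hω hα h12 (by simp [hx₁]) hx₂ hpos₂ hx₂'
  rw [hπω] at hgap₁ hgap₂
  obtain ⟨-, hα₁⟩ := h.sturm_comparison hω hα h01 h₀ hx₁ hpos₁ hx₁' (by rw [hπω]; linarith)
  obtain ⟨-, hα₂⟩ := h.neg.sturm_comparison hω hα h12 (by simp [hx₁]) hx₂ hpos₂ hx₂'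
    (by rw [hπω]; linarith)
  rw [show t₀ + T = t₂ by linarith, ← Ioc_union_Ioc_eq_Ioc h01.le h12.le, ae_restrict_union_iff]
  exact ⟨hα₁, hα₂⟩

end IsDampedHillSolution

theorem ContDiff.isDampedHillSolution {c : ℝ} {α x : ℝ → ℝ} (hx : ContDiff ℝ 2 x)
    (hode : ∀ᵐ t, deriv (deriv x) t + c * deriv x t + α t * x t = 0) :
    IsDampedHillSolution c α x (deriv x) (deriv (deriv x)) := by
  have hx' : ContDiff ℝ 1 (deriv x) := (contDiff_succ_iff_deriv (n := 1)).1 hx |>.2.2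
  exact ⟨fun t => (hx.differentiable two_ne_zero t).hasDerivAt,
    fun t => (hx'.differentiable one_ne_zero t).hasDerivAt, hx'.continuous_deriv le_rfl, hode⟩

/-- Under the bound `α ≪ (2π)²/T² + c²/4`, any `T`-periodic solution of
`x'' + c x' + α x = 0` is either trivial or nowhere vanishing. -/
theorem stmt4 (c T : ℝ) (hT : 0 < T) (α : ℝ → ℝ) (hmeas : Measurable α)
    (hper : Function.Periodic α T)
    (hbdd : ∃ C : ℝ, ∀ᵐ t ∂(volume : Measure ℝ), |α t| ≤ C)
    (hub : ∀ᵐ t ∂(volume : Measure ℝ), α t ≤ (2 * π) ^ 2 / T ^ 2 + c ^ 2 / 4)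
    (hstrict : 0 < volume {t ∈ Icc (0 : ℝ) T | α t < (2 * π) ^ 2 / T ^ 2 + c ^ 2 / 4})
    (x : ℝ → ℝ) (hx : ContDiff ℝ 2 x) (hxper : Function.Periodic x T)
    (hode : ∀ᵐ t ∂(volume : Measure ℝ),
      deriv (deriv x) t + c * deriv x t + α t * x t = 0) :
    (∀ t, x t = 0) ∨ (∀ t, x t ≠ 0) := by
  obtain ⟨C, hC⟩ := hbdd
  have hsol := hx.isDampedHillSolution hode
  refine or_iff_not_imp_right.2 fun hzero => ?_
  obtain ⟨t₀, ht₀⟩ := not_forall_not.1 hzero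
  by_contra! ⟨s, hs⟩
  have hsimple : ∀ u, x u = 0 → deriv x u ≠ 0 := fun u hu hu' =>
    hs (hsol.eq_zero_of_eq_zero_of_deriv_eq_zero hC hu hu' s)
  have hα := hsol.ae_restrict_eq_of_periodic hT (by simpa only [div_pow] using hub) hxper
    hsimple ht₀
  set A := α ⁻¹' Iio ((2 * π) ^ 2 / T ^ 2 + c ^ 2 / 4)
  have hA : MeasurableSet A := hmeas measurableSet_Iio
  have hnull : volume (A ∩ Ioc t₀ (t₀ + T)) = 0 := by
    rw [← Measure.restrict_apply hA, measure_eq_zero_iff_ae_notMem]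
    filter_upwards [hα] with t ht
    simp [A, ht, div_pow]
  have hpos : 0 < volume (A ∩ Ioc 0 (0 + T)) := by
    rw [zero_add, measure_congr ((ae_eq_refl A).inter Ioc_ae_eq_Icc), inter_comm]
    exact hstrict
  rw [hper.volume_preimage_inter_Ioc hT hA 0 t₀, hnull] at hpos
  exact lt_irrefl 0 hpos
end

section
/- Let c > 0, T > 0, and let α be T-periodic, essentially bounded, with α(t) ≤ π²/T² + c²/4 a.e. (strict on a positive-measure set) and average (1/T)∫₀^T α dt > c²/4. Then the equation x'' + c x' + α(t) x = 0 admits no real Floquet multiplier; equivalently, the period-T monodromy matrix of the associated first-order system has no real eigenvalue. -/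
/-
An eigenvector of the monodromy matrix for a real multiplier `ρ` gives a solution with
`x (t + T) = ρ x t`, `x' (t + T) = ρ x' t`.

If `x` never vanishes, the Riccati variable `w = x' / x` takes the same value at `0` and `T`, and
`w' = -α - c w - w² ≤ c² / 4 - α`; integrating over a period bounds the mean of `α` by `c² / 4`.

Otherwise `x` vanishes at some `t₀` and then at `t₀ + T`. The substitution `z = exp (c t / 2) x`
turns the equation into `z'' + (α - c² / 4) z = 0`, and Sturm comparison of `z` with
`sin (π (t - t₀) / L)` on its first nodal interval `[t₀, t₀ + L]`, `L ≤ T`, forces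
`α - c² / 4 = π² / L²` almost everywhere there, which contradicts `α ≪ π² / T² + c² / 4`.
-/

open Real MeasureTheory Set intervalIntegral
open scoped Matrix

theorem MeasureTheory.LocallyIntegrable.intervalIntegrable {E : Type*} [NormedAddCommGroup E]
    {f : ℝ → E} (hf : LocallyIntegrable f volume) (a b : ℝ) : IntervalIntegrable f volume a b :=
  (hf.integrableOn_isCompact isCompact_uIcc).intervalIntegrable

theorem MeasureTheory.AEStronglyMeasurable.locallyIntegrable_of_ae_abs_le {f : ℝ → ℝ} {C : ℝ}
    (hf : AEStronglyMeasurable f volume) (hC : ∀ᵐ t, |f t| ≤ C) : LocallyIntegrable f volume :=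
  fun x => ⟨Icc (x - 1) (x + 1), Icc_mem_nhds (by linarith) (by linarith),
    Measure.integrableOn_of_bounded (by simp) hf (ae_restrict_of_ae hC)⟩

/-- Near a point where `G` is not integrable, all the integrals below are the junk value `0`,
so `F` is constant off that point. -/
theorem locallyIntegrable_of_sub_eq_integral {F G : ℝ → ℝ}
    (h : ∀ s t, F t - F s = ∫ r in s..t, G r) : LocallyIntegrable F volume := by
  intro a
  by_cases hG : ∃ s t, s < a ∧ a < t ∧ IntervalIntegrable G volume s t
  · obtain ⟨s, t, hs, ht, hGst⟩ := hG
    have hprim : ContinuousOn (fun x => F s + ∫ r in s..x, G r) (Icc s t) := by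
      rw [← uIcc_of_le (hs.trans ht).le]
      exact continuousOn_const.add (continuousOn_primitive_interval' hGst left_mem_uIcc)
    have hF : ContinuousOn F (Icc s t) := hprim.congr fun x _ => by linarith [h s x]
    exact ⟨Icc s t, Icc_mem_nhds hs ht, hF.integrableOn_Icc⟩
  · push Not at hG
    have hconst : ∀ x, x ≠ a → F x = F (a + 1) := by
      have hflat : ∀ s t, s < a → a < t → F t = F s := fun s t hs ht => by
        linarith [h s t, integral_undef (hG s t hs ht)]
      intro x hx
      rcases hx.lt_or_gt with hx | hx
      · exact (hflat x (a + 1) hx (by linarith)).symm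
      · rw [hflat (a - 1) x (by linarith) hx, hflat (a - 1) (a + 1) (by linarith) (by linarith)]
    have hae : F =ᵐ[volume] fun _ => F (a + 1) := by
      filter_upwards [compl_mem_ae_iff.2 (measure_singleton a)] with x hx using hconst x hx
    exact (locallyIntegrable_const _).congr hae.symm a

theorem continuous_of_sub_eq_integral {F G : ℝ → ℝ} (hG : LocallyIntegrable G volume)
    (h : ∀ s t, F t - F s = ∫ r in s..t, G r) : Continuous F := by
  have hF : F = fun t => F 0 + ∫ r in (0 : ℝ)..t, G r := funext fun t => by linarith [h 0 t]
  rw [hF]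
  exact continuous_const.add (continuous_primitive hG.intervalIntegrable 0)

theorem integral_mul_add_mul_deriv_eq_sub {f g φ φ' : ℝ → ℝ} (hg : LocallyIntegrable g volume)
    (hf : ∀ s t, f t - f s = ∫ r in s..t, g r) (hφ : ∀ t, HasDerivAt φ (φ' t) t)
    (hφ' : Continuous φ') (a b : ℝ) :
    ∫ r in a..b, (g r * φ r + f r * φ' r) = f b * φ b - f a * φ a := by
  have hf_eq : f = fun t => (∫ r in a..t, g r) + f a := funext fun t => by linarith [hf a t]
  have hf_ac : AbsolutelyContinuousOnInterval f a b := by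
    rw [hf_eq]
    exact ((hg.intervalIntegrable a b).absolutelyContinuousOnInterval_intervalIntegral
      left_mem_uIcc).fun_add contDiffOn_const.absolutelyContinuousOnInterval
  have hφ_deriv : deriv φ = φ' := funext fun t => (hφ t).deriv
  have hφ_ac : AbsolutelyContinuousOnInterval φ a b :=
    (contDiff_one_iff_deriv.2 ⟨fun t => (hφ t).differentiableAt, hφ_deriv ▸ hφ'⟩).contDiffOn
      |>.absolutelyContinuousOnInterval
  rw [← hf_ac.integral_deriv_mul_eq_sub hφ_ac, hφ_deriv]
  refine integral_congr_ae ?_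
  filter_upwards [_root_.LocallyIntegrable.ae_hasDerivAt_integral hg] with t ht _
  have hft : HasDerivAt f (g t) t := by
    rw [hf_eq]
    exact (ht a).add_const _
  rw [hft.deriv]

theorem eq_zero_of_le_mul_abs_integral_of_le {u : ℝ → ℝ} {K t₀ t : ℝ} (hu : Continuous u)
    (hu₀ : ∀ t, 0 ≤ u t) (h : ∀ t, u t ≤ K * |∫ r in t₀..t, u r|) (ht : t₀ ≤ t) : u t = 0 := by
  have hU : ∀ s ∈ Icc t₀ t, ∫ r in t₀..s, u r = 0 :=
    eq_zero_of_abs_deriv_le_mul_abs_self_of_eq_zero_right (f' := u) (K := K)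
      (fun s _ => (hu.integral_hasStrictDerivAt t₀ s).hasDerivAt.continuousAt.continuousWithinAt)
      (fun s _ => (hu.integral_hasStrictDerivAt t₀ s).hasDerivAt.hasDerivWithinAt)
      integral_same (fun s _ => by simpa [abs_of_nonneg (hu₀ s)] using h s)
  have := h t
  rw [hU t ⟨ht, le_rfl⟩, abs_zero, mul_zero] at this
  exact le_antisymm this (hu₀ t)

theorem eq_zero_of_le_mul_abs_integral {u : ℝ → ℝ} {K t₀ : ℝ} (hu : Continuous u)
    (hu₀ : ∀ t, 0 ≤ u t) (h : ∀ t, u t ≤ K * |∫ r in t₀..t, u r|) (t : ℝ) : u t = 0 := by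
  rcases le_total t₀ t with ht | ht
  · exact eq_zero_of_le_mul_abs_integral_of_le hu hu₀ h ht
  · have hrefl : ∀ s, u (-s) ≤ K * |∫ r in -t₀..s, u (-r)| := fun s => by
      rw [integral_comp_neg, integral_symm, abs_neg, neg_neg]
      exact h (-s)
    simpa using eq_zero_of_le_mul_abs_integral_of_le (hu.comp continuous_neg) (hu₀ <| - ·)
      hrefl (neg_le_neg ht)

theorem IsPreconnected.forall_pos_or_forall_neg_s6 {f : ℝ → ℝ} {s : Set ℝ} (hs : IsPreconnected s)
    (hf : ContinuousOn f s) (h : ∀ t ∈ s, f t ≠ 0) : (∀ t ∈ s, 0 < f t) ∨ (∀ t ∈ s, f t < 0) := by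
  by_contra! hsign
  obtain ⟨⟨t₁, ht₁, hf₁⟩, ⟨t₂, ht₂, hf₂⟩⟩ := hsign
  obtain ⟨t, ht, hft⟩ := hs.intermediate_value ht₁ ht₂ hf ⟨hf₁, hf₂⟩
  exact h t ht hft

theorem exists_first_zero_of_hasDerivAt {f : ℝ → ℝ} {f' a b : ℝ} (hf : ContinuousOn f (Icc a b))
    (hd : HasDerivAt f f' a) (hf' : f' ≠ 0) (hab : a < b) (hb : f b = 0) :
    ∃ c ∈ Ioc a b, f c = 0 ∧ ∀ t ∈ Ioo a c, f t ≠ 0 := by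
  obtain ⟨u, hau, hu⟩ := mem_nhdsGT_iff_exists_Ioc_subset.1
    ((hd.eventually_ne hf' (c := 0)).filter_mono (nhdsGT_le_nhdsNE a))
  have hub : u ≤ b := le_of_not_gt fun hbu => hu ⟨hab, hbu.le⟩ hb
  set Z := Icc u b ∩ f ⁻¹' {0}
  have hZ : IsClosed Z := (hf.mono (Icc_subset_Icc_left hau.le)).preimage_isClosed_of_isClosed
    isClosed_Icc isClosed_singleton
  have hbZ : b ∈ Z := ⟨⟨hub, le_rfl⟩, hb⟩
  have hZbdd : BddBelow Z := ⟨u, fun t ht => ht.1.1⟩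
  have hcZ : sInf Z ∈ Z := hZ.csInf_mem ⟨b, hbZ⟩ hZbdd
  refine ⟨sInf Z, ⟨hau.trans_le hcZ.1.1, hcZ.1.2⟩, hcZ.2, fun t ht hft => ?_⟩
  rcases le_or_gt t u with htu | htu
  · exact hu ⟨ht.1, htu⟩ hft
  · exact (csInf_le hZbdd ⟨⟨htu.le, ht.2.le.trans hcZ.1.2⟩, hft⟩).not_gt ht.2

theorem Function.Periodic.volume_Ioc_inter_preimage {f : ℝ → ℝ} {T : ℝ} (hf : Periodic f T)
    (hm : Measurable f) (hT : 0 ≤ T) {B : Set ℝ} (hB : MeasurableSet B) (a b : ℝ) :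
    volume (Ioc a (a + T) ∩ f ⁻¹' B) = volume (Ioc b (b + T) ∩ f ⁻¹' B) := by
  have hS : MeasurableSet (f ⁻¹' B) := hm hB
  have hind : Periodic ((f ⁻¹' B).indicator (1 : ℝ → ℝ)) T := hf.comp (B.indicator 1)
  have hvol : ∀ t, ∫ r in t..t + T, (f ⁻¹' B).indicator 1 r =
      (volume (Ioc t (t + T) ∩ f ⁻¹' B)).toReal := fun t => by
    rw [integral_of_le (by linarith), integral_indicator_one hS, measureReal_def,
      Measure.restrict_apply hS, inter_comm]
  have hfin : ∀ t, volume (Ioc t (t + T) ∩ f ⁻¹' B) ≠ ⊤ := fun t =>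
    measure_ne_top_of_subset inter_subset_left measure_Ioc_lt_top.ne
  rw [← ENNReal.toReal_eq_toReal_iff' (hfin a) (hfin b), ← hvol, ← hvol,
    hind.intervalIntegral_add_eq]

/-- `x'' + c x' + α x = 0` as the first-order system `x' = y`, `y' = -α x - c y`, in integrated
form, so that `α` need only be locally integrable. -/
structure IsDampedHillSol (α : ℝ → ℝ) (c : ℝ) (x y : ℝ → ℝ) : Prop where
  continuous_fst : Continuous x
  continuous_snd : Continuous y
  sub_fst : ∀ s t, x t - x s = ∫ r in s..t, y r
  sub_snd : ∀ s t, y t - y s = ∫ r in s..t, (-α r * x r - c * y r)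

namespace IsDampedHillSol

variable {α q : ℝ → ℝ} {c : ℝ} {x y : ℝ → ℝ}

theorem locallyIntegrable_rhs_of_continuous (hα : LocallyIntegrable α volume) (hx : Continuous x)
    (hy : LocallyIntegrable y volume) :
    LocallyIntegrable (fun r => -α r * x r - c * y r) volume :=
  ((hα.mul_continuous hx).neg.sub
    (hy.continuous_mul (continuous_const : Continuous fun _ : ℝ => c))).congr
    (ae_of_all _ fun r => by simp)

theorem of_sub_eq_integral (hα : LocallyIntegrable α volume)
    (hx : ∀ s t, x t - x s = ∫ r in s..t, y r)
    (hy : ∀ s t, y t - y s = ∫ r in s..t, (-α r * x r - c * y r)) : IsDampedHillSol α c x y := by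
  have hy_loc : LocallyIntegrable y volume := locallyIntegrable_of_sub_eq_integral hy
  have hx_cont : Continuous x := continuous_of_sub_eq_integral hy_loc hx
  exact ⟨hx_cont, continuous_of_sub_eq_integral
    (locallyIntegrable_rhs_of_continuous hα hx_cont hy_loc) hy, hx, hy⟩

theorem locallyIntegrable_rhs (hα : LocallyIntegrable α volume) (hs : IsDampedHillSol α c x y) :
    LocallyIntegrable (fun r => -α r * x r - c * y r) volume :=
  locallyIntegrable_rhs_of_continuous hα hs.continuous_fst hs.continuous_snd.locallyIntegrable

theorem hasDerivAt_fst (hs : IsDampedHillSol α c x y) (t : ℝ) : HasDerivAt x (y t) t := by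
  have hx : x = fun t => x 0 + ∫ r in (0 : ℝ)..t, y r :=
    funext fun t => by linarith [hs.sub_fst 0 t]
  rw [hx]
  exact ((hs.continuous_snd.integral_hasStrictDerivAt 0 t).hasDerivAt).const_add _

theorem add {x₁ y₁ x₂ y₂ : ℝ → ℝ} (hα : LocallyIntegrable α volume)
    (hs₁ : IsDampedHillSol α c x₁ y₁) (hs₂ : IsDampedHillSol α c x₂ y₂) :
    IsDampedHillSol α c (fun t => x₁ t + x₂ t) (fun t => y₁ t + y₂ t) where
  continuous_fst := hs₁.continuous_fst.add hs₂.continuous_fst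
  continuous_snd := hs₁.continuous_snd.add hs₂.continuous_snd
  sub_fst s t := by
    rw [integral_add (hs₁.continuous_snd.intervalIntegrable s t)
      (hs₂.continuous_snd.intervalIntegrable s t), ← hs₁.sub_fst, ← hs₂.sub_fst]
    ring
  sub_snd s t := by
    calc _ = (y₁ t - y₁ s) + (y₂ t - y₂ s) := by ring
      _ = _ := by
        rw [hs₁.sub_snd, hs₂.sub_snd, ← integral_add
          ((hs₁.locallyIntegrable_rhs hα).intervalIntegrable s t)
          ((hs₂.locallyIntegrable_rhs hα).intervalIntegrable s t)]
        congr 1; ext r; ring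

theorem const_mul (hs : IsDampedHillSol α c x y) (a : ℝ) :
    IsDampedHillSol α c (fun t => a * x t) (fun t => a * y t) where
  continuous_fst := continuous_const.mul hs.continuous_fst
  continuous_snd := continuous_const.mul hs.continuous_snd
  sub_fst s t := by rw [intervalIntegral.integral_const_mul, ← hs.sub_fst]; ring
  sub_snd s t := by
    calc _ = a * (y t - y s) := by ring
      _ = _ := by rw [hs.sub_snd, ← intervalIntegral.integral_const_mul]; congr 1; ext r; ring

theorem comp_add_right {T : ℝ} (hper : Function.Periodic α T) (hs : IsDampedHillSol α c x y) :
    IsDampedHillSol α c (fun t => x (t + T)) (fun t => y (t + T)) where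
  continuous_fst := hs.continuous_fst.comp (continuous_add_const T)
  continuous_snd := hs.continuous_snd.comp (continuous_add_const T)
  sub_fst s t := by rw [integral_comp_add_right (fun r => y r)]; exact hs.sub_fst _ _
  sub_snd s t := by
    have h : ∫ r in s..t, (-α (r + T) * x (r + T) - c * y (r + T)) =
        ∫ r in s + T..t + T, (-α r * x r - c * y r) :=
      integral_comp_add_right (fun r => -α r * x r - c * y r) T
    have hper' : ∀ r, α (r + T) = α r := hper
    simp only [hper'] at h
    rw [h]
    exact hs.sub_snd _ _

theorem eq_zero_of_eq_zero {C t₀ : ℝ} (hC : ∀ᵐ t, |α t| ≤ C) (hs : IsDampedHillSol α c x y)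
    (hx₀ : x t₀ = 0) (hy₀ : y t₀ = 0) (t : ℝ) : x t = 0 ∧ y t = 0 := by
  set u := fun t => |x t| + |y t|
  have hu : Continuous u := hs.continuous_fst.abs.add hs.continuous_snd.abs
  have hbound : ∀ t, u t ≤ (1 + (|C| + |c|)) * |∫ r in t₀..t, u r| := by
    intro t
    have hx : |x t| ≤ |∫ r in t₀..t, u r| := by
      have h := norm_integral_le_abs_of_norm_le (f := y) (g := u) (μ := volume) (a := t₀) (b := t)
        (ae_of_all _ fun r => le_add_of_nonneg_left (abs_nonneg (x r))) (hu.intervalIntegrable _ _)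
      rwa [← hs.sub_fst, hx₀, sub_zero, Real.norm_eq_abs] at h
    have hy : |y t| ≤ |∫ r in t₀..t, (|C| + |c|) * u r| := by
      have hrhs : ∀ᵐ r, ‖-α r * x r - c * y r‖ ≤ (|C| + |c|) * u r := hC.mono fun r hr => by
        have hα : |α r| ≤ |C| := hr.trans (le_abs_self C)
        calc ‖-α r * x r - c * y r‖ ≤ |α r| * |x r| + |c| * |y r| := by
              simpa [abs_mul] using abs_sub (-α r * x r) (c * y r)
          _ ≤ |C| * |x r| + |c| * |y r| := by gcongr
          _ ≤ (|C| + |c|) * (|x r| + |y r|) := by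
              nlinarith [abs_nonneg C, abs_nonneg c, abs_nonneg (x r), abs_nonneg (y r)]
      have h := norm_integral_le_abs_of_norm_le (μ := volume) (a := t₀) (b := t)
        (ae_restrict_of_ae hrhs) ((continuous_const.mul hu).intervalIntegrable _ _)
      rwa [← hs.sub_snd, hy₀, sub_zero, Real.norm_eq_abs] at h
    rw [intervalIntegral.integral_const_mul, abs_mul,
      abs_of_nonneg (by positivity : (0 : ℝ) ≤ |C| + |c|)] at hy
    linarith
  have hu₀ := eq_zero_of_le_mul_abs_integral hu (fun t => by positivity) hbound t
  exact ⟨abs_eq_zero.1 (by linarith [abs_nonneg (x t), abs_nonneg (y t)]),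
    abs_eq_zero.1 (by linarith [abs_nonneg (x t), abs_nonneg (y t)])⟩

theorem exp_mul (hα : LocallyIntegrable α volume) (hs : IsDampedHillSol α c x y) :
    IsDampedHillSol (fun t => α t - c ^ 2 / 4) 0 (fun t => exp (c / 2 * t) * x t)
      (fun t => exp (c / 2 * t) * (y t + c / 2 * x t)) := by
  set E := fun t => exp (c / 2 * t)
  have hE : ∀ t, HasDerivAt E (c / 2 * E t) t := fun t => by
    simpa [E, mul_comm] using ((hasDerivAt_id t).const_mul (c / 2)).exp
  have hEc : Continuous E := by fun_prop
  have hEx : ∀ s t, E t * x t - E s * x s = ∫ r in s..t, (y r * E r + x r * (c / 2 * E r)) :=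
    fun s t => by
      rw [integral_mul_add_mul_deriv_eq_sub hs.continuous_snd.locallyIntegrable hs.sub_fst hE
        (continuous_const.mul hEc)]
      ring
  refine ⟨hEc.mul hs.continuous_fst, hEc.mul (hs.continuous_snd.add
    (continuous_const.mul hs.continuous_fst)), fun s t => ?_, fun s t => ?_⟩
  · rw [hEx]
    congr 1; ext r; ring
  · have hEy := integral_mul_add_mul_deriv_eq_sub (hs.locallyIntegrable_rhs hα) hs.sub_snd hE
      (continuous_const.mul hEc) s t
    calc _ = (E t * y t - E s * y s) + c / 2 * (E t * x t - E s * x s) := by ring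
      _ = _ := by
        rw [hEx, ← intervalIntegral.integral_const_mul, mul_comm (E t), mul_comm (E s), ← hEy,
          ← intervalIntegral.integral_add]
        · congr 1; ext r; ring
        · exact ((hs.locallyIntegrable_rhs hα).mul_continuous hEc).intervalIntegrable s t |>.add
            ((hs.continuous_snd.mul (continuous_const.mul hEc)).intervalIntegrable s t)
        · exact (continuous_const.mul ((hs.continuous_snd.mul hEc).add
            (hs.continuous_fst.mul (continuous_const.mul hEc)))).intervalIntegrable s t

/-- The Riccati variable `w = y / x` satisfies `w' = -α - c w - w²`, and `-c w - w² ≤ c² / 4`. -/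
theorem integral_le_of_forall_ne_zero (hα : LocallyIntegrable α volume)
    (hs : IsDampedHillSol α c x y) (hx : ∀ t, x t ≠ 0) {a b : ℝ} (hab : a ≤ b)
    (hend : y b / x b = y a / x a) : ∫ t in a..b, α t ≤ (b - a) * (c ^ 2 / 4) := by
  set w := fun t => y t / x t
  have hw : Continuous w := hs.continuous_snd.div hs.continuous_fst hx
  have hwint : IntervalIntegrable (fun t => c * w t + w t ^ 2) volume a b :=
    (by fun_prop : Continuous fun t => c * w t + w t ^ 2).intervalIntegrable a b
  have hricc : ∫ t in a..b, α t = ∫ t in a..b, -(c * w t + w t ^ 2) := by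
    have h := integral_mul_add_mul_deriv_eq_sub (hs.locallyIntegrable_rhs hα) hs.sub_snd
      (fun t => (hs.hasDerivAt_fst t).inv (hx t))
      (hs.continuous_snd.neg.div (hs.continuous_fst.pow 2) fun t => pow_ne_zero 2 (hx t)) a b
    simp only [Pi.inv_apply, ← div_eq_mul_inv, hend, sub_self] at h
    rw [← sub_eq_zero, ← intervalIntegral.integral_sub (g := fun t => -(c * w t + w t ^ 2))
      (hα.intervalIntegrable a b) hwint.neg,
      ← neg_eq_zero, ← intervalIntegral.integral_neg, ← h]
    refine integral_congr fun t _ => ?_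
    simp only [w]
    field_simp [hx t]
    ring
  calc ∫ t in a..b, α t = ∫ t in a..b, -(c * w t + w t ^ 2) := hricc
    _ ≤ ∫ _ in a..b, c ^ 2 / 4 := integral_mono_on hab hwint.neg intervalIntegrable_const
        fun t _ => by nlinarith [sq_nonneg (w t + c / 2)]
    _ = (b - a) * (c ^ 2 / 4) := by rw [intervalIntegral.integral_const, smul_eq_mul]

theorem integral_sub_mul_mul_eq_zero (hq : LocallyIntegrable q volume)
    (hs : IsDampedHillSol q 0 x y) {φ φ' : ℝ → ℝ} {lam a b : ℝ}
    (hφ : ∀ t, HasDerivAt φ (φ' t) t) (hφ' : ∀ t, HasDerivAt φ' (-lam * φ t) t)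
    (ha : x a = 0) (hb : x b = 0) (hφa : φ a = 0) (hφb : φ b = 0) :
    ∫ t in a..b, (lam - q t) * (x t * φ t) = 0 := by
  have hφc : Continuous φ := continuous_iff_continuousAt.2 fun t => (hφ t).continuousAt
  have hφ'c : Continuous φ' := continuous_iff_continuousAt.2 fun t => (hφ' t).continuousAt
  have h₁ := integral_mul_add_mul_deriv_eq_sub (hs.locallyIntegrable_rhs hq) hs.sub_snd
    hφ hφ'c a b
  have h₂ := integral_mul_add_mul_deriv_eq_sub hs.continuous_snd.locallyIntegrable hs.sub_fst
    hφ' (continuous_const.mul hφc) a b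
  rw [hφa, hφb] at h₁
  rw [ha, hb] at h₂
  calc ∫ t in a..b, (lam - q t) * (x t * φ t)
      = (∫ t in a..b, ((-q t * x t - 0 * y t) * φ t + y t * φ' t)) -
          ∫ t in a..b, (y t * φ' t + x t * (-lam * φ t)) := by
        rw [← intervalIntegral.integral_sub]
        · congr 1; ext t; ring
        · exact ((hs.locallyIntegrable_rhs hq).mul_continuous hφc).intervalIntegrable a b
            |>.add ((hs.continuous_snd.mul hφ'c).intervalIntegrable a b)
        · exact ((hs.continuous_snd.mul hφ'c).add (hs.continuous_fst.mul
            (continuous_const.mul hφc))).intervalIntegrable a b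
    _ = 0 := by rw [h₁, h₂]; ring

theorem volume_lt_sq_pi_div_eq_zero_of_pos (hq : LocallyIntegrable q volume)
    (hs : IsDampedHillSol q 0 x y) {a b : ℝ} (hab : a < b) (ha : x a = 0) (hb : x b = 0)
    (hpos : ∀ t ∈ Ioo a b, 0 < x t) (hle : ∀ᵐ t, t ∈ Ioo a b → q t ≤ (π / (b - a)) ^ 2) :
    volume {t ∈ Ioo a b | q t < (π / (b - a)) ^ 2} = 0 := by
  set k := π / (b - a)
  have hk : 0 < k := div_pos pi_pos (sub_pos.2 hab)
  set s := fun t => sin (k * (t - a))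
  have hlin : ∀ t, HasDerivAt (fun t => k * (t - a)) k t := fun t => by
    simpa using ((hasDerivAt_id t).sub_const a).const_mul k
  have hsb : s b = 0 := by simp [s, k, div_mul_cancel₀ π (sub_pos.2 hab).ne']
  have hs_pos : ∀ t ∈ Ioo a b, 0 < s t := fun t ht => by
    refine sin_pos_of_pos_of_lt_pi (mul_pos hk (sub_pos.2 ht.1)) ?_
    calc k * (t - a) < k * (b - a) := by gcongr; exact ht.2
      _ = π := div_mul_cancel₀ π (sub_pos.2 hab).ne'
  set F := fun t => (k ^ 2 - q t) * (x t * s t)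
  have hF_zero : ∫ t in a..b, F t = 0 :=
    hs.integral_sub_mul_mul_eq_zero hq (φ' := fun t => k * cos (k * (t - a)))
      (fun t => by simpa [s, mul_comm] using (hlin t).sin)
      (fun t => ((hlin t).cos.const_mul k).congr_deriv (by simp only [s]; ring))
      ha hb (by simp [s]) hsb
  have hF_int : IntervalIntegrable F volume a b :=
    (((locallyIntegrable_const _).sub hq).mul_continuous
      (hs.continuous_fst.mul (by fun_prop : Continuous s))).intervalIntegrable a b
  have hF_nonneg : 0 ≤ᵐ[volume.restrict (uIoc a b)] F := by
    rw [uIoc_of_le hab.le]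
    filter_upwards [ae_restrict_mem measurableSet_Ioc, ae_restrict_of_ae hle] with t ht hqt
    rcases ht.2.lt_or_eq with htb | rfl
    · exact mul_nonneg (sub_nonneg.2 (hqt ⟨ht.1, htb⟩))
        (mul_pos (hpos t ⟨ht.1, htb⟩) (hs_pos t ⟨ht.1, htb⟩)).le
    · simp [F, hb]
  have hsupp : volume (Function.support F ∩ Ioc a b) = 0 := by
    have := (integral_pos_iff_support_of_nonneg_ae' hF_nonneg hF_int).not.1 (by simp [hF_zero])
    simpa [hab] using this
  refine measure_mono_null (fun t ht => ?_) hsupp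
  exact ⟨(mul_pos (sub_pos.2 ht.2) (mul_pos (hpos t ht.1) (hs_pos t ht.1))).ne', ht.1.1,
    ht.1.2.le⟩

/-- Sturm comparison with `sin (π (t - a) / (b - a))`, a solution of `s'' = -(π / (b - a))² s`
that is positive on `(a, b)` and vanishes at its ends. -/
theorem volume_lt_sq_pi_div_eq_zero (hq : LocallyIntegrable q volume)
    (hs : IsDampedHillSol q 0 x y) {a b : ℝ} (hab : a < b) (ha : x a = 0) (hb : x b = 0)
    (hne : ∀ t ∈ Ioo a b, x t ≠ 0)
    (hle : ∀ᵐ t, t ∈ Ioo a b → q t ≤ (π / (b - a)) ^ 2) :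
    volume {t ∈ Ioo a b | q t < (π / (b - a)) ^ 2} = 0 := by
  rcases isPreconnected_Ioo.forall_pos_or_forall_neg_s6 hs.continuous_fst.continuousOn hne with
    hpos | hneg
  · exact hs.volume_lt_sq_pi_div_eq_zero_of_pos hq hab ha hb hpos hle
  · exact (hs.const_mul (-1)).volume_lt_sq_pi_div_eq_zero_of_pos hq hab (by simp [ha])
      (by simp [hb]) (fun t ht => by simpa using hneg t ht) hle

theorem fst_add_ne_zero_of_fst_eq_zero {T t₀ : ℝ} (hT : 0 < T) (hmeas : Measurable α)
    (hα : LocallyIntegrable α volume) (hper : Function.Periodic α T)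
    (hub : ∀ᵐ t, α t ≤ π ^ 2 / T ^ 2 + c ^ 2 / 4)
    (hstrict : 0 < volume {t ∈ Icc (0 : ℝ) T | α t < π ^ 2 / T ^ 2 + c ^ 2 / 4})
    (hs : IsDampedHillSol α c x y) (hx₀ : x t₀ = 0) (hy₀ : y t₀ ≠ 0) : x (t₀ + T) ≠ 0 := by
  intro hxT
  have hz := hs.exp_mul hα
  obtain ⟨b, ⟨htb, hbT⟩, hzb, hne⟩ := exists_first_zero_of_hasDerivAt
    hz.continuous_fst.continuousOn (hz.hasDerivAt_fst t₀) (by simp [hx₀, hy₀, exp_ne_zero])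
    (by linarith : t₀ < t₀ + T) (by simp [hxT])
  have hle : π ^ 2 / T ^ 2 ≤ (π / (b - t₀)) ^ 2 := by
    rw [div_pow]
    gcongr
    linarith
  have hq : LocallyIntegrable (fun t => α t - c ^ 2 / 4) volume :=
    hα.sub (locallyIntegrable_const _)
  have hnull := hz.volume_lt_sq_pi_div_eq_zero hq htb (by simp [hx₀]) hzb
    hne (hub.mono fun t ht _ => by linarith)
  rcases hbT.lt_or_eq with hbT | rfl
  · have hlt : π ^ 2 / T ^ 2 < (π / (b - t₀)) ^ 2 := by
      rw [div_pow]
      gcongr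
      linarith
    have hsub : Ioo t₀ b ≤ᵐ[volume] {t ∈ Ioo t₀ b | α t - c ^ 2 / 4 < (π / (b - t₀)) ^ 2} := by
      filter_upwards [hub] with t ht ht' using ⟨ht', by linarith⟩
    have hpos : 0 < volume (Ioo t₀ b) := by simpa using htb
    exact hpos.ne' (measure_mono_null_ae hsub hnull)
  · set B := Iio (π ^ 2 / T ^ 2 + c ^ 2 / 4)
    have hvol : volume (Ioo t₀ (t₀ + T) ∩ α ⁻¹' B) = volume (Icc 0 T ∩ α ⁻¹' B) := by
      rw [measure_congr ((Ioo_ae_eq_Ioc (μ := volume)).inter (ae_eq_refl (α ⁻¹' B))),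
        hper.volume_Ioc_inter_preimage hmeas hT.le measurableSet_Iio t₀ 0, zero_add,
        measure_congr ((Ioc_ae_eq_Icc (μ := volume)).inter (ae_eq_refl (α ⁻¹' B)))]
    refine (hstrict.trans_eq hvol.symm).ne' (measure_mono_null (fun t ht => ?_) hnull)
    have hαt : α t < π ^ 2 / T ^ 2 + c ^ 2 / 4 := ht.2
    refine ⟨ht.1, ?_⟩
    rw [add_sub_cancel_left, div_pow]
    linarith

theorem fst_add_eq_mul {C T ρ : ℝ} (hα : LocallyIntegrable α volume) (hC : ∀ᵐ t, |α t| ≤ C)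
    (hper : Function.Periodic α T)
    (hs : IsDampedHillSol α c x y) (hxT : x T = ρ * x 0) (hyT : y T = ρ * y 0) (t : ℝ) :
    x (t + T) = ρ * x t := by
  have h := ((hs.comp_add_right hper).add hα (hs.const_mul (-ρ))).eq_zero_of_eq_zero hC
    (t₀ := 0) (by simp only [zero_add, hxT]; ring) (by simp only [zero_add, hyT]; ring) t
  linear_combination h.1

end IsDampedHillSol

theorem isDampedHillSol_mulVec {α : ℝ → ℝ} {c : ℝ} (hα : LocallyIntegrable α volume)
    {M : ℝ → Matrix (Fin 2) (Fin 2) ℝ} (hM : ∀ i j : Fin 2, ∀ s t : ℝ,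
      M t i j - M s i j = ∫ r in s..t, (!![0, 1; -α r, -c] * M r) i j)
    (v : Fin 2 → ℝ) : IsDampedHillSol α c (fun t => (M t *ᵥ v) 0) (fun t => (M t *ᵥ v) 1) := by
  have hcol : ∀ j, IsDampedHillSol α c (fun t => M t 0 j) (fun t => M t 1 j) := fun j =>
    .of_sub_eq_integral hα
      (fun s t => by simpa [Matrix.mul_apply, Fin.sum_univ_two] using hM 0 j s t)
      (fun s t => by simpa [Matrix.mul_apply, Fin.sum_univ_two, sub_eq_add_neg] using hM 1 j s t)
  convert ((hcol 0).const_mul (v 0)).add hα ((hcol 1).const_mul (v 1)) using 1 <;>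
    funext t <;> simp [Matrix.mulVec, dotProduct, Fin.sum_univ_two, mul_comm]

theorem exists_isDampedHillSol_of_det_eq_zero {α : ℝ → ℝ} {c C T ρ : ℝ}
    (hα : LocallyIntegrable α volume) (hC : ∀ᵐ t, |α t| ≤ C) {M : ℝ → Matrix (Fin 2) (Fin 2) ℝ}
    (hM0 : M 0 = 1) (hM : ∀ i j : Fin 2, ∀ s t : ℝ,
      M t i j - M s i j = ∫ r in s..t, (!![0, 1; -α r, -c] * M r) i j)
    (hdet : (M T - ρ • (1 : Matrix (Fin 2) (Fin 2) ℝ)).det = 0) :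
    ∃ x y : ℝ → ℝ, IsDampedHillSol α c x y ∧ (∀ t, x t = 0 → y t ≠ 0) ∧
      x T = ρ * x 0 ∧ y T = ρ * y 0 := by
  obtain ⟨v, hv, hMv⟩ := Matrix.exists_mulVec_eq_zero_iff.2 hdet
  have hs := isDampedHillSol_mulVec hα hM v
  refine ⟨_, _, hs, fun t hxt hyt => hv ?_, ?_, ?_⟩
  · obtain ⟨h₀, h₁⟩ := hs.eq_zero_of_eq_zero hC hxt hyt 0
    ext i; fin_cases i
    exacts [by simpa [hM0] using h₀, by simpa [hM0] using h₁]
  · simpa [hM0, Matrix.sub_mulVec, sub_eq_zero] using congr_fun hMv 0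
  · simpa [hM0, Matrix.sub_mulVec, sub_eq_zero] using congr_fun hMv 1

theorem stmt6_general (c T : ℝ) (hT : 0 < T) (α : ℝ → ℝ) (hmeas : Measurable α)
    (hper : Function.Periodic α T)
    (hbdd : ∃ C : ℝ, ∀ᵐ t ∂(volume : Measure ℝ), |α t| ≤ C)
    (hub : ∀ᵐ t ∂(volume : Measure ℝ), α t ≤ π ^ 2 / T ^ 2 + c ^ 2 / 4)
    (hstrict : 0 < volume {t ∈ Icc (0 : ℝ) T | α t < π ^ 2 / T ^ 2 + c ^ 2 / 4})
    (havg : c ^ 2 / 4 < (1 / T) * ∫ t in (0 : ℝ)..T, α t)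
    (M : ℝ → Matrix (Fin 2) (Fin 2) ℝ) (hM0 : M 0 = 1)
    (hMint : ∀ i j : Fin 2, ∀ s t : ℝ,
      M t i j - M s i j = ∫ r in s..t, (!![0, 1; -α r, -c] * M r) i j) :
    ¬ ∃ ρ : ℝ, (M T - ρ • (1 : Matrix (Fin 2) (Fin 2) ℝ)).det = 0 := by
  rintro ⟨ρ, hdet⟩
  obtain ⟨C, hC⟩ := hbdd
  have hα := hmeas.aestronglyMeasurable.locallyIntegrable_of_ae_abs_le hC
  obtain ⟨x, y, hs, hnontriv, hxT, hyT⟩ :=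
    exists_isDampedHillSol_of_det_eq_zero hα hC hM0 hMint hdet
  by_cases hzero : ∃ t₀, x t₀ = 0
  · obtain ⟨t₀, ht₀⟩ := hzero
    refine hs.fst_add_ne_zero_of_fst_eq_zero hT hmeas hα hper hub hstrict ht₀ (hnontriv t₀ ht₀) ?_
    rw [hs.fst_add_eq_mul hα hC hper hxT hyT, ht₀, mul_zero]
  · push Not at hzero
    have hρ : ρ ≠ 0 := by rintro rfl; exact hzero T (by simpa using hxT)
    have hint := hs.integral_le_of_forall_ne_zero hα hzero hT.le
      (by rw [hxT, hyT, mul_div_mul_left _ _ hρ])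
    rw [one_div, ← not_le, inv_mul_le_iff₀ hT] at havg
    exact havg (by simpa using hint)

/-- Under `α ≪ π²/T² + c²/4` and average of `α` greater than `c²/4`, the monodromy matrix of
`x'' + c x' + α x = 0` has no real eigenvalue (no real Floquet multiplier). -/
theorem stmt6 (c T : ℝ) (hc : 0 < c) (hT : 0 < T) (α : ℝ → ℝ) (hmeas : Measurable α)
    (hper : Function.Periodic α T)
    (hbdd : ∃ C : ℝ, ∀ᵐ t ∂(volume : Measure ℝ), |α t| ≤ C)
    (hub : ∀ᵐ t ∂(volume : Measure ℝ), α t ≤ π ^ 2 / T ^ 2 + c ^ 2 / 4)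
    (hstrict : 0 < volume {t ∈ Icc (0 : ℝ) T | α t < π ^ 2 / T ^ 2 + c ^ 2 / 4})
    (havg : c ^ 2 / 4 < (1 / T) * ∫ t in (0 : ℝ)..T, α t)
    (M : ℝ → Matrix (Fin 2) (Fin 2) ℝ) (hM0 : M 0 = 1)
    (hMint : ∀ i j : Fin 2, ∀ s t : ℝ,
      M t i j - M s i j = ∫ r in s..t, (!![0, 1; -α r, -c] * M r) i j) :
    ¬ ∃ ρ : ℝ, (M T - ρ • (1 : Matrix (Fin 2) (Fin 2) ℝ)).det = 0 :=
  stmt6_general c T hT α hmeas hper hbdd hub hstrict havg M hM0 hMint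
end
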